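/- arXiv:math/0502436 — 3 statements merged into one kernel-verified Lean document; each statement's English description precedes it below -/
import Mathlib

section
/- Let f be a C¹ function with f(0)=f(1)=0, let ε ≥ 0, and let (U,c) be a classical solution of the regularized traveling-front problem with parameters (ε, σ=1) such that U_s is integrable over ℝ×Q×(0,1), f(U) is integrable over ℝ×Q×(0,1), and the first and second derivatives of U converge uniformly to 0 as s → ±∞. Then c = ∫_{ℝ×Q×(0,1)} f(U(s,y,τ)) ds dy dτ. -/
open MeasureTheory Filter Set Topology

noncomputable section

/-- Partial derivative in the `i`-th spatial coordinate of a function on `ℝ^N × ℝ`. -/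
def pdX {N : ℕ} (i : Fin N) (u : (Fin N → ℝ) → ℝ → ℝ) : (Fin N → ℝ) → ℝ → ℝ :=
  fun x t => deriv (fun z => u (Function.update x i z) t) (x i)

/-- Partial derivative in time of a function on `ℝ^N × ℝ`. -/
def pdT {N : ℕ} (u : (Fin N → ℝ) → ℝ → ℝ) : (Fin N → ℝ) → ℝ → ℝ :=
  fun x t => deriv (fun z => u x z) t

/-- Partial derivative in `s` of a function `U(s,y,τ)`. -/
def pdS {N : ℕ} (U : ℝ → (Fin N → ℝ) → ℝ → ℝ) : ℝ → (Fin N → ℝ) → ℝ → ℝ :=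
  fun s y τ => deriv (fun z => U z y τ) s

/-- Partial derivative in the `i`-th component of `y` of a function `U(s,y,τ)`. -/
def pdY {N : ℕ} (i : Fin N) (U : ℝ → (Fin N → ℝ) → ℝ → ℝ) : ℝ → (Fin N → ℝ) → ℝ → ℝ :=
  fun s y τ => deriv (fun z => U s (Function.update y i z) τ) (y i)

/-- Partial derivative in `τ` of a function `U(s,y,τ)`. -/
def pdTau {N : ℕ} (U : ℝ → (Fin N → ℝ) → ℝ → ℝ) : ℝ → (Fin N → ℝ) → ℝ → ℝ :=
  fun s y τ => deriv (fun z => U s y z) τ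

/-- `k` is a unit vector of `ℝ^N` (Euclidean norm one). -/
def IsUnitVector {N : ℕ} (k : Fin N → ℝ) : Prop := (∑ i, (k i) ^ 2) = 1

/-- A smooth advection field `b(x,t)`, `1`-periodic in each component of `x` and in `t`,
spatially divergence free, with mean zero over the period cell `Q × (0,1)`. -/
def IsAdmissibleField {N : ℕ} (b : (Fin N → ℝ) → ℝ → (Fin N → ℝ)) : Prop :=
  ContDiff ℝ (⊤ : ℕ∞) (fun p : (Fin N → ℝ) × ℝ => b p.1 p.2) ∧
  (∀ x t i, b (x + Pi.single i 1) t = b x t) ∧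
  (∀ x t, b x (t + 1) = b x t) ∧
  (∀ x t, (∑ i, pdX i (fun x' t' => b x' t' i) x t) = 0) ∧
  (∀ i, (∫ x in Icc (0 : Fin N → ℝ) 1, ∫ t in Ioo (0 : ℝ) 1, b x t i) = 0)

/-- A positive nonlinearity: `f ∈ C²`, `f(0) = f(1) = 0`, `f > 0` on `(0,1)`. -/
def IsPositiveNonlinearity (f : ℝ → ℝ) : Prop :=
  ContDiff ℝ 2 f ∧ f 0 = 0 ∧ f 1 = 0 ∧ ∀ u ∈ Ioo (0 : ℝ) 1, 0 < f u

/-- A KPP nonlinearity. -/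
def IsKPP (f : ℝ → ℝ) : Prop :=
  IsPositiveNonlinearity f ∧ 0 < deriv f 0 ∧ deriv f 1 < 0 ∧
  ∀ u ∈ Icc (0 : ℝ) 1, f u ≤ u * deriv f 0

/-- A combustion (ignition type) nonlinearity with ignition temperature `θ`. -/
def IsCombustion (f : ℝ → ℝ) : Prop :=
  ContDiff ℝ 1 f ∧ f 1 = 0 ∧ deriv f 1 < 0 ∧
  ∃ θ ∈ Ioo (0 : ℝ) 1, (∀ u ∈ Icc (0 : ℝ) θ, f u = 0) ∧ ∀ u ∈ Ioo θ 1, 0 < f u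

/-- `U(s,y,τ)` is `1`-periodic in each component of `y` and in `τ`. -/
def PeriodicYTau {N : ℕ} (U : ℝ → (Fin N → ℝ) → ℝ → ℝ) : Prop :=
  (∀ s y τ i, U s (y + Pi.single i 1) τ = U s y τ) ∧ (∀ s y τ, U s y (τ + 1) = U s y τ)

/-- `U(s,y,τ) → 0` as `s → +∞` and `U(s,y,τ) → 1` as `s → -∞`, uniformly in `(y,τ)`. -/
def FrontLimits {N : ℕ} (U : ℝ → (Fin N → ℝ) → ℝ → ℝ) : Prop :=
  (∀ η > (0 : ℝ), ∃ M : ℝ, ∀ s y τ, M ≤ s → |U s y τ| < η) ∧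
  (∀ η > (0 : ℝ), ∃ M : ℝ, ∀ s y τ, s ≤ M → |U s y τ - 1| < η)

/-- The regularized traveling front equation
`U_τ = ε U_ss + (k ∂_s + ∇_y)² U + σ b · (k ∂_s + ∇_y) U + c U_s + f(U)`. -/
def RegFrontEq {N : ℕ} (b : (Fin N → ℝ) → ℝ → (Fin N → ℝ)) (f : ℝ → ℝ) (k : Fin N → ℝ)
    (ε σ c : ℝ) (U : ℝ → (Fin N → ℝ) → ℝ → ℝ) : Prop :=
  ∀ s y τ,
    pdTau U s y τ =
      ε * pdS (pdS U) s y τ +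
      (pdS (pdS U) s y τ + 2 * (∑ i, k i * pdY i (pdS U) s y τ)
        + (∑ i, pdY i (pdY i U) s y τ)) +
      σ * (∑ i, b y τ i * (k i * pdS U s y τ + pdY i U s y τ)) +
      c * pdS U s y τ + f (U s y τ)

/-- A classical solution of the regularized traveling-front problem with parameters `(ε,σ)`
and speed `c`: a smooth function, `1`-periodic in `y` and `τ`, solving the equation, with
uniform limits `0` at `s = +∞` and `1` at `s = -∞`. -/
def IsRegFront {N : ℕ} (b : (Fin N → ℝ) → ℝ → (Fin N → ℝ)) (f : ℝ → ℝ) (k : Fin N → ℝ)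
    (ε σ c : ℝ) (U : ℝ → (Fin N → ℝ) → ℝ → ℝ) : Prop :=
  ContDiff ℝ (⊤ : ℕ∞) (fun p : ℝ × (Fin N → ℝ) × ℝ => U p.1 p.2.1 p.2.2) ∧
  PeriodicYTau U ∧ RegFrontEq b f k ε σ c U ∧ FrontLimits U

/-- First and second partial derivatives of `U` tend to `0` uniformly as `s → ±∞`. -/
def DerivsVanish {N : ℕ} (U : ℝ → (Fin N → ℝ) → ℝ → ℝ) : Prop :=
  ∀ η > (0 : ℝ), ∃ M > (0 : ℝ), ∀ s y τ, M ≤ |s| →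
    |pdS U s y τ| < η ∧ |pdTau U s y τ| < η ∧ (∀ i, |pdY i U s y τ| < η) ∧
    |pdS (pdS U) s y τ| < η ∧ (∀ i, |pdY i (pdS U) s y τ| < η) ∧
    (∀ i j, |pdY i (pdY j U) s y τ| < η)

/-- The period cell `ℝ × Q × (0,1)` in the `(s,y,τ)` variables. -/
def cell (N : ℕ) : Set (ℝ × (Fin N → ℝ) × ℝ) :=
  (univ : Set ℝ) ×ˢ ((Icc (0 : Fin N → ℝ) 1) ×ˢ (Ioo (0 : ℝ) 1))

/-- A classical solution of `u_t = Δu + b·∇u + f(u)` on `ℝ^N × ℝ`. -/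
def IsRDASolution {N : ℕ} (b : (Fin N → ℝ) → ℝ → (Fin N → ℝ)) (f : ℝ → ℝ)
    (u : (Fin N → ℝ) → ℝ → ℝ) : Prop :=
  ContDiff ℝ 2 (fun p : (Fin N → ℝ) × ℝ => u p.1 p.2) ∧
  ∀ x t, pdT u x t = (∑ i, pdX i (pdX i u) x t) + (∑ i, b x t i * pdX i u x t) + f (u x t)

/-- A principal eigenpair `(μ, Φ)` in direction `k` at `λ = lam` (with zeroth order constant
`c₀`, in the paper `c₀ = f'(0)`): `Φ > 0` smooth, `1`-periodic in `x` and `t`, with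
`Δ Φ + (b - 2λk)·∇Φ + (λ² - λ(b·k) + c₀)Φ - Φ_t = μ Φ`. -/
def IsEigenpair {N : ℕ} (b : (Fin N → ℝ) → ℝ → (Fin N → ℝ)) (k : Fin N → ℝ)
    (c₀ lam μ : ℝ) (Φ : (Fin N → ℝ) → ℝ → ℝ) : Prop :=
  ContDiff ℝ (⊤ : ℕ∞) (fun p : (Fin N → ℝ) × ℝ => Φ p.1 p.2) ∧
  (∀ x t, 0 < Φ x t) ∧
  (∀ x t i, Φ (x + Pi.single i 1) t = Φ x t) ∧
  (∀ x t, Φ x (t + 1) = Φ x t) ∧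
  ∀ x t,
    (∑ i, pdX i (pdX i Φ) x t) + (∑ i, (b x t i - 2 * lam * k i) * pdX i Φ x t) +
      (lam ^ 2 - lam * (∑ i, b x t i * k i) + c₀) * Φ x t - pdT Φ x t = μ * Φ x t

/-- A (bounded) classical solution of the initial value problem
`u_t = Δu + b·∇u + f(u)`, `u(x,0) = u₀(x)`. -/
def IsIVPSolution {N : ℕ} (b : (Fin N → ℝ) → ℝ → (Fin N → ℝ)) (f : ℝ → ℝ)
    (u : (Fin N → ℝ) → ℝ → ℝ) (u₀ : (Fin N → ℝ) → ℝ) : Prop :=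
  ContinuousOn (fun p : (Fin N → ℝ) × ℝ => u p.1 p.2) {p | 0 ≤ p.2} ∧
  ContDiffOn ℝ 2 (fun p : (Fin N → ℝ) × ℝ => u p.1 p.2) {p | 0 < p.2} ∧
  (∀ x, u x 0 = u₀ x) ∧
  (∀ x t, 0 < t →
    pdT u x t = (∑ i, pdX i (pdX i u) x t) + (∑ i, b x t i * pdX i u x t) + f (u x t))

/-- `u₀` is wave-like in direction `k`:  `0 ≤ u₀ ≤ 1`, `inf_{Σ_r^-} u₀ → 1` as `r → -∞` and
`sup_{Σ_r^+} u₀ → 0` as `r → +∞`. -/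
def IsWaveLike {N : ℕ} (k : Fin N → ℝ) (u₀ : (Fin N → ℝ) → ℝ) : Prop :=
  (∀ x, u₀ x ∈ Icc (0 : ℝ) 1) ∧
  (∀ η > (0 : ℝ), ∃ R : ℝ, ∀ x, (∑ i, k i * x i) ≤ R → 1 - η < u₀ x) ∧
  (∀ η > (0 : ℝ), ∃ R : ℝ, ∀ x, R ≤ (∑ i, k i * x i) → u₀ x < η)

section S5Helpers


theorem s5_hasDerivAt_line {E : Type*} [NormedAddCommGroup E] [NormedSpace ℝ E]
    {G : E → ℝ} (hG : Differentiable ℝ G) (p v : E) (z : ℝ) :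
    HasDerivAt (fun t : ℝ => G (p + t • v)) (fderiv ℝ G (p + z • v) v) z := by
  have h1 : HasDerivAt (fun t : ℝ => p + t • v) v z := by
    simpa using ((hasDerivAt_id z).smul_const v).const_add p
  exact (hG (p + z • v)).hasFDerivAt.comp_hasDerivAt z h1

variable {N : ℕ}

def s5_eS : ℝ × (Fin N → ℝ) × ℝ := (1, 0, 0)
def s5_eY (i : Fin N) : ℝ × (Fin N → ℝ) × ℝ := (0, Pi.single i 1, 0)
def s5_eT : ℝ × (Fin N → ℝ) × ℝ := (0, 0, 1)

theorem s5_hdS {G : ℝ × (Fin N → ℝ) × ℝ → ℝ} (hG : Differentiable ℝ G)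
    (s : ℝ) (y : Fin N → ℝ) (τ : ℝ) :
    HasDerivAt (fun z => G (z, y, τ)) (fderiv ℝ G (s, y, τ) s5_eS) s := by
  have h1 : HasDerivAt (fun z : ℝ => ((z, y, τ) : ℝ × (Fin N → ℝ) × ℝ))
      ((1, 0, 0) : ℝ × (Fin N → ℝ) × ℝ) s := (hasDerivAt_id s).prodMk (hasDerivAt_const s (y, τ))
  exact (hG (s, y, τ)).hasFDerivAt.comp_hasDerivAt s h1

theorem s5_hdT {G : ℝ × (Fin N → ℝ) × ℝ → ℝ} (hG : Differentiable ℝ G)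
    (s : ℝ) (y : Fin N → ℝ) (τ : ℝ) :
    HasDerivAt (fun z => G (s, y, z)) (fderiv ℝ G (s, y, τ) s5_eT) τ := by
  have h1 : HasDerivAt (fun z : ℝ => ((s, y, z) : ℝ × (Fin N → ℝ) × ℝ))
      ((0, 0, 1) : ℝ × (Fin N → ℝ) × ℝ) τ :=
    (hasDerivAt_const τ s).prodMk ((hasDerivAt_const τ y).prodMk (hasDerivAt_id τ))
  exact (hG (s, y, τ)).hasFDerivAt.comp_hasDerivAt τ h1

theorem s5_hdY {G : ℝ × (Fin N → ℝ) × ℝ → ℝ} (hG : Differentiable ℝ G)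
    (i : Fin N) (s : ℝ) (y : Fin N → ℝ) (τ z : ℝ) :
    HasDerivAt (fun z => G (s, Function.update y i z, τ))
      (fderiv ℝ G (s, Function.update y i z, τ) (s5_eY i)) z := by
  have h1 : HasDerivAt (fun z : ℝ => ((s, Function.update y i z, τ) : ℝ × (Fin N → ℝ) × ℝ))
      ((0, Pi.single i 1, 0) : ℝ × (Fin N → ℝ) × ℝ) z :=
    (hasDerivAt_const z s).prodMk ((hasDerivAt_update y i z).prodMk (hasDerivAt_const z τ))
  exact (hG _).hasFDerivAt.comp_hasDerivAt z h1

theorem s5_contDiff_dir {E : Type*} [NormedAddCommGroup E] [NormedSpace ℝ E]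
    {G : E → ℝ} (hG : ContDiff ℝ (⊤ : ℕ∞) G) (v : E) :
    ContDiff ℝ (⊤ : ℕ∞) (fun p => fderiv ℝ G p v) :=
  (hG.fderiv_right (by simp)).clm_apply contDiff_const

theorem s5_periodic_fderiv {E : Type*} [NormedAddCommGroup E] [NormedSpace ℝ E]
    {G : E → ℝ} (hG : Differentiable ℝ G) (w : E) (hper : ∀ p, G (p + w) = G p)
    (p v : E) : fderiv ℝ G (p + w) v = fderiv ℝ G p v := by
  have h1 : HasFDerivAt (fun q => G (q + w)) (fderiv ℝ G (p + w)) p := by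
    have := (hG (p + w)).hasFDerivAt.comp p
      ((hasFDerivAt_id p).add_const w)
    exact this
  have h2 : (fun q => G (q + w)) = G := funext hper
  rw [h2] at h1
  rw [h1.fderiv]

def s5_S (N : ℕ) : Set ((Fin N → ℝ) × ℝ) := Icc (0 : Fin N → ℝ) 1 ×ˢ Ioo (0 : ℝ) 1

theorem s5_measS : (volume : Measure ((Fin N → ℝ) × ℝ)) (s5_S N) = 1 := by
  rw [s5_S, Measure.volume_eq_prod, Measure.prod_prod, Real.volume_Icc_pi, Real.volume_Ioo]
  simp

theorem s5_restrictS : (volume : Measure ((Fin N → ℝ) × ℝ)).restrict (s5_S N) =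
    ((volume : Measure (Fin N → ℝ)).restrict (Icc 0 1)).prod
      ((volume : Measure ℝ).restrict (Ioo 0 1)) := by
  rw [s5_S, Measure.volume_eq_prod, ← Measure.prod_restrict]

theorem s5_restrictCell : (volume : Measure (ℝ × (Fin N → ℝ) × ℝ)).restrict
      ((univ : Set ℝ) ×ˢ s5_S N) =
    (volume : Measure ℝ).prod ((volume : Measure ((Fin N → ℝ) × ℝ)).restrict (s5_S N)) := by
  rw [Measure.volume_eq_prod, ← Measure.prod_restrict, Measure.restrict_univ]

theorem s5_intS {g : (Fin N → ℝ) × ℝ → ℝ} (hg : Continuous g) : IntegrableOn g (s5_S N) := by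
  have hc : IsCompact (Icc (0 : Fin N → ℝ) 1 ×ˢ Icc (0 : ℝ) 1) :=
    isCompact_Icc.prod isCompact_Icc
  exact (hg.continuousOn.integrableOn_compact hc).mono_set
    (prod_mono_right Ioo_subset_Icc_self)

theorem s5_restrict_pi_pi {ι : Type*} [Fintype ι] {α : ι → Type*} [∀ i, MeasureSpace (α i)]
    [∀ i, SigmaFinite (volume : Measure (α i))] (s : ∀ i, Set (α i))
    (hs : ∀ i, MeasurableSet (s i)) :
    Measure.pi (fun i => (volume : Measure (α i)).restrict (s i)) =
      (Measure.pi fun i => (volume : Measure (α i))).restrict (Set.pi univ s) := by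
  refine Measure.pi_eq fun t ht => ?_
  rw [Measure.restrict_apply (MeasurableSet.univ_pi ht), ← Set.pi_inter_distrib, Measure.pi_pi]
  simp_rw [Measure.restrict_apply (ht _)]

theorem s5_fubiniS {g : (Fin N → ℝ) × ℝ → ℝ} (hg : Continuous g) :
    ∫ q in s5_S N, g q = ∫ y in Icc (0 : Fin N → ℝ) 1, ∫ t in Ioo (0 : ℝ) 1, g (y, t) := by
  have hint := s5_intS hg
  rw [IntegrableOn, s5_restrictS] at hint
  rw [show (∫ q in s5_S N, g q) = ∫ q, g q ∂(volume.restrict (s5_S N)) from rfl, s5_restrictS]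
  exact integral_prod g hint

theorem s5_fubiniS' {g : (Fin N → ℝ) × ℝ → ℝ} (hg : Continuous g) :
    ∫ q in s5_S N, g q = ∫ t in Ioo (0 : ℝ) 1, ∫ y in Icc (0 : Fin N → ℝ) 1, g (y, t) := by
  have hint := s5_intS hg
  rw [IntegrableOn, s5_restrictS] at hint
  rw [show (∫ q in s5_S N, g q) = ∫ q, g q ∂(volume.restrict (s5_S N)) from rfl, s5_restrictS]
  exact integral_prod_symm g hint

theorem s5_tau_zero {G : ℝ × (Fin N → ℝ) × ℝ → ℝ} (hG : ContDiff ℝ (⊤ : ℕ∞) G)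
    (hper : ∀ s y τ, G (s, y, τ + 1) = G (s, y, τ)) (s : ℝ) :
    ∫ q in s5_S N, fderiv ℝ G (s, q.1, q.2) s5_eT = 0 := by
  have hd : Continuous fun p : ℝ × (Fin N → ℝ) × ℝ => fderiv ℝ G p s5_eT :=
    (s5_contDiff_dir hG s5_eT).continuous
  have hcont : Continuous fun q : (Fin N → ℝ) × ℝ => fderiv ℝ G (s, q.1, q.2) s5_eT := by
    fun_prop
  rw [s5_fubiniS hcont]
  have hinner : ∀ y : Fin N → ℝ, (∫ t in Ioo (0 : ℝ) 1, fderiv ℝ G (s, y, t) s5_eT) = 0 := by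
    intro y
    have h1 : (∫ t in Ioo (0 : ℝ) 1, fderiv ℝ G (s, y, t) s5_eT)
        = ∫ t in (0 : ℝ)..1, fderiv ℝ G (s, y, t) s5_eT := by
      rw [← integral_Ioc_eq_integral_Ioo, intervalIntegral.integral_of_le zero_le_one]
    rw [h1, intervalIntegral.integral_eq_sub_of_hasDerivAt
      (fun t _ => s5_hdT (hG.differentiable (by simp)) s y t)
      ((hd.comp (by fun_prop)).intervalIntegrable 0 1)]
    have h2 := hper s y 0
    rw [zero_add] at h2
    rw [h2, sub_self]
  simp only [hinner, integral_zero]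

theorem s5_insertNth_update {n : ℕ} (i : Fin (n + 1)) (w : Fin n → ℝ) (z : ℝ) :
    Function.update (Fin.insertNth (α := fun _ => ℝ) i 0 w) i z
      = Fin.insertNth (α := fun _ => ℝ) i z w := by
  refine funext fun l => ?_
  refine Fin.succAboveCases i ?_ (fun j => ?_) l
  · simp
  · rw [Function.update_of_ne (Fin.succAbove_ne i j)]
    simp

theorem s5_insertNth_one {n : ℕ} (i : Fin (n + 1)) (w : Fin n → ℝ) :
    Fin.insertNth (α := fun _ => ℝ) i 1 w
      = Fin.insertNth (α := fun _ => ℝ) i 0 w + Pi.single i 1 := by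
  refine funext fun l => ?_
  refine Fin.succAboveCases i ?_ (fun j => ?_) l
  · simp
  · simp [Pi.single_eq_of_ne (Fin.succAbove_ne i j).symm,
      Pi.single_eq_of_ne (Fin.succAbove_ne i j)]

theorem s5_yicc_zero {n : ℕ} {G : ℝ × (Fin (n + 1) → ℝ) × ℝ → ℝ} (hG : ContDiff ℝ (⊤ : ℕ∞) G)
    (i : Fin (n + 1)) (hper : ∀ s y τ, G (s, y + Pi.single i 1, τ) = G (s, y, τ)) (s τ : ℝ) :
    ∫ y in Icc (0 : Fin (n + 1) → ℝ) 1, fderiv ℝ G (s, y, τ) (s5_eY i) = 0 := by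
  set gY : (Fin (n + 1) → ℝ) → ℝ := fun y => fderiv ℝ G (s, y, τ) (s5_eY i) with hgY
  have hd : Continuous fun p : ℝ × (Fin (n + 1) → ℝ) × ℝ => fderiv ℝ G p (s5_eY i) :=
    (s5_contDiff_dir hG (s5_eY i)).continuous
  have hcont : Continuous gY := by rw [hgY]; fun_prop
  -- rewrite as integral over pi measure of restricted factors
  set μ : Measure ℝ := volume.restrict (Icc 0 1) with hμ
  have h1 : (∫ y in Icc (0 : Fin (n + 1) → ℝ) 1, gY y)
      = ∫ y, gY y ∂(Measure.pi fun _ : Fin (n + 1) => μ) := by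
    rw [s5_restrict_pi_pi _ (fun _ => measurableSet_Icc), pi_univ_Icc, ← volume_pi]
    rfl
  have hIcc : IntegrableOn gY (Icc (0 : Fin (n + 1) → ℝ) 1) :=
    hcont.continuousOn.integrableOn_compact isCompact_Icc
  have hintpi : Integrable gY (Measure.pi fun _ : Fin (n + 1) => μ) := by
    rw [s5_restrict_pi_pi _ (fun _ => measurableSet_Icc), pi_univ_Icc, ← volume_pi]
    exact hIcc
  have hmp := measurePreserving_piFinSuccAbove (fun _ : Fin (n + 1) => μ) i
  have hemb := (MeasurableEquiv.piFinSuccAbove (fun _ : Fin (n + 1) => ℝ) i).measurableEmbedding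
  have h2 : ∫ y, gY y ∂(Measure.pi fun _ : Fin (n + 1) => μ)
      = ∫ p, gY ((MeasurableEquiv.piFinSuccAbove (fun _ : Fin (n + 1) => ℝ) i).symm p)
          ∂(μ.prod (Measure.pi fun _ : Fin n => μ)) := by
    rw [← hmp.integral_comp hemb]
    congr 1
    exact funext fun y => by rw [MeasurableEquiv.symm_apply_apply]
  have hsymm : ∀ p : ℝ × (Fin n → ℝ),
      (MeasurableEquiv.piFinSuccAbove (fun _ : Fin (n + 1) => ℝ) i).symm p
        = Fin.insertNth (α := fun _ => ℝ) i p.1 p.2 := fun p => rfl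
  have hint2 : Integrable
      (fun p => gY ((MeasurableEquiv.piFinSuccAbove (fun _ : Fin (n + 1) => ℝ) i).symm p))
      (μ.prod (Measure.pi fun _ : Fin n => μ)) :=
    ((hmp.symm _).integrable_comp_emb (MeasurableEquiv.measurableEmbedding _)).2 hintpi
  rw [h1, h2, integral_prod_symm _ hint2]
  have hinner : ∀ w : Fin n → ℝ,
      (∫ z, gY ((MeasurableEquiv.piFinSuccAbove (fun _ : Fin (n + 1) => ℝ) i).symm (z, w)) ∂μ)
        = 0 := by
    intro w
    simp only [hsymm]
    have hft : (∫ z, gY (Fin.insertNth (α := fun _ => ℝ) i z w) ∂μ)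
        = ∫ z in (0:ℝ)..1, gY (Fin.insertNth (α := fun _ => ℝ) i z w) := by
      rw [hμ, intervalIntegral.integral_of_le zero_le_one, ← integral_Icc_eq_integral_Ioc]
    have hderiv : ∀ z ∈ uIcc (0:ℝ) 1,
        HasDerivAt (fun z => G (s, Fin.insertNth (α := fun _ => ℝ) i z w, τ))
          (gY (Fin.insertNth (α := fun _ => ℝ) i z w)) z := by
      intro z _
      have := s5_hdY (hG.differentiable (by simp)) i s
        (Fin.insertNth (α := fun _ => ℝ) i 0 w) τ z
      simpa only [s5_insertNth_update] using this
    have hii : IntervalIntegrable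
        (fun z => gY (Fin.insertNth (α := fun _ => ℝ) i z w)) volume 0 1 := by
      apply Continuous.intervalIntegrable
      have : Continuous fun z : ℝ => Fin.insertNth (α := fun _ => ℝ) i z w := by
        rw [show (fun z : ℝ => Fin.insertNth (α := fun _ => ℝ) i z w)
          = fun z : ℝ => Function.update (Fin.insertNth (α := fun _ => ℝ) i 0 w) i z from
          funext fun z => (s5_insertNth_update i w z).symm]
        fun_prop
      fun_prop
    rw [hft, intervalIntegral.integral_eq_sub_of_hasDerivAt hderiv hii]
    rw [show G (s, Fin.insertNth (α := fun _ => ℝ) i 1 w, τ)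
        = G (s, Fin.insertNth (α := fun _ => ℝ) i 0 w, τ) by
      rw [s5_insertNth_one]; exact hper s _ τ]
    exact sub_self _
  rw [integral_congr_ae (ae_of_all _ hinner), integral_zero]

theorem s5_y_zero {n : ℕ} {G : ℝ × (Fin (n + 1) → ℝ) × ℝ → ℝ} (hG : ContDiff ℝ (⊤ : ℕ∞) G)
    (i : Fin (n + 1)) (hper : ∀ s y τ, G (s, y + Pi.single i 1, τ) = G (s, y, τ)) (s : ℝ) :
    ∫ q in s5_S (n + 1), fderiv ℝ G (s, q.1, q.2) (s5_eY i) = 0 := by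
  have hd : Continuous fun p : ℝ × (Fin (n + 1) → ℝ) × ℝ => fderiv ℝ G p (s5_eY i) :=
    (s5_contDiff_dir hG (s5_eY i)).continuous
  have hcont : Continuous fun q : (Fin (n + 1) → ℝ) × ℝ => fderiv ℝ G (s, q.1, q.2) (s5_eY i) :=
    by fun_prop
  rw [s5_fubiniS' hcont]
  have : ∀ t : ℝ, (∫ y in Icc (0 : Fin (n + 1) → ℝ) 1, fderiv ℝ G (s, y, t) (s5_eY i)) = 0 :=
    fun t => s5_yicc_zero hG i hper s t
  simp only [this, integral_zero]

theorem s5_hasDerivAt_intS {G : ℝ × (Fin N → ℝ) × ℝ → ℝ} (hG : ContDiff ℝ (⊤ : ℕ∞) G) (s₀ : ℝ) :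
    HasDerivAt (fun s => ∫ q in s5_S N, G (s, q.1, q.2))
      (∫ q in s5_S N, fderiv ℝ G (s₀, q.1, q.2) s5_eS) s₀ := by
  have hd : Continuous fun p : ℝ × (Fin N → ℝ) × ℝ => fderiv ℝ G p s5_eS :=
    (s5_contDiff_dir hG s5_eS).continuous
  have hK : IsCompact (Icc (s₀ - 1) (s₀ + 1) ×ˢ (Icc (0 : Fin N → ℝ) 1 ×ˢ Icc (0 : ℝ) 1)) :=
    isCompact_Icc.prod (isCompact_Icc.prod isCompact_Icc)
  obtain ⟨C, hC⟩ := hK.exists_bound_of_continuousOn hd.continuousOn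
  have hGc : Continuous G := hG.continuous
  haveI : IsFiniteMeasure (volume.restrict (s5_S N)) :=
    ⟨by rw [Measure.restrict_apply_univ, s5_measS]; exact ENNReal.one_lt_top⟩
  have hmS : MeasurableSet (s5_S N) := (measurableSet_Icc.prod measurableSet_Ioo)
  have key := hasDerivAt_integral_of_dominated_loc_of_deriv_le (μ := volume.restrict (s5_S N))
    (F := fun s q => G (s, q.1, q.2)) (F' := fun s q => fderiv ℝ G (s, q.1, q.2) s5_eS)
    (x₀ := s₀) (bound := fun _ => C) (s := Metric.ball s₀ 1) (Metric.ball_mem_nhds s₀ one_pos)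
    (Eventually.of_forall fun x =>
      (Continuous.aestronglyMeasurable (hGc.comp (by fun_prop))))
    ((s5_intS (hGc.comp (by fun_prop))).mono_measure le_rfl)
    (Continuous.aestronglyMeasurable (hd.comp (by fun_prop)))
    ?_ (integrable_const C) ?_
  · exact key.2
  · refine (ae_restrict_iff' hmS).2 (Eventually.of_forall fun q hq => fun x hx => ?_)
    refine hC (x, q) ⟨?_, ?_⟩
    · have := abs_lt.1 (by simpa [Real.dist_eq] using Metric.mem_ball.1 hx)
      exact ⟨by linarith [this.2], by linarith [this.1]⟩
    · exact ⟨hq.1, Ioo_subset_Icc_self hq.2⟩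
  · exact Eventually.of_forall fun q => fun x _ =>
      s5_hdS (hG.differentiable (by simp)) x q.1 q.2

theorem s5_tendsto_int {l : Filter ℝ} {g : ℝ → (Fin N → ℝ) × ℝ → ℝ} {L : (Fin N → ℝ) × ℝ → ℝ}
    (hgint : ∀ s, IntegrableOn (g s) (s5_S N)) (hLint : IntegrableOn L (s5_S N))
    (h : ∀ η > (0 : ℝ), ∀ᶠ s in l, ∀ q ∈ s5_S N, |g s q - L q| ≤ η) :
    Tendsto (fun s => ∫ q in s5_S N, g s q) l (𝓝 (∫ q in s5_S N, L q)) := by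
  rw [Metric.tendsto_nhds]
  intro ε hε
  filter_upwards [h (ε / 2) (by positivity)] with s hs
  rw [Real.dist_eq, ← integral_sub (hgint s) hLint]
  have hb : ‖∫ q in s5_S N, (g s q - L q)‖ ≤ (ε / 2) * (volume (s5_S N)).toReal := by
    refine norm_setIntegral_le_of_norm_le_const ?_
      fun q hq => ?_
    · rw [s5_measS]; exact ENNReal.one_lt_top
    · simpa [Real.norm_eq_abs] using hs q hq
  rw [Real.norm_eq_abs] at hb
  rw [s5_measS] at hb
  simp only [ENNReal.toReal_one, mul_one] at hb
  linarith

theorem s5_hdX2 {g : (Fin N → ℝ) × ℝ → ℝ} (hg : Differentiable ℝ g) (i : Fin N)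
    (x : Fin N → ℝ) (t z : ℝ) :
    HasDerivAt (fun z => g (Function.update x i z, t))
      (fderiv ℝ g (Function.update x i z, t) ((Pi.single i 1 : Fin N → ℝ), (0 : ℝ))) z := by
  have h1 : HasDerivAt (fun z : ℝ => ((Function.update x i z, t) : (Fin N → ℝ) × ℝ))
      (((Pi.single i 1 : Fin N → ℝ), (0 : ℝ))) z :=
    (hasDerivAt_update x i z).prodMk (hasDerivAt_const z t)
  exact (hg _).hasFDerivAt.comp_hasDerivAt z h1

theorem s5_pdX_eq {g : (Fin N → ℝ) × ℝ → ℝ} (hg : Differentiable ℝ g) (i : Fin N)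
    (x : Fin N → ℝ) (t : ℝ) :
    pdX i (fun x' t' => g (x', t')) x t
      = fderiv ℝ g (x, t) ((Pi.single i 1 : Fin N → ℝ), (0 : ℝ)) := by
  have h := (s5_hdX2 hg i x t (x i)).deriv
  rw [Function.update_eq_self] at h
  exact h

theorem s5_per_push {G : ℝ × (Fin N → ℝ) × ℝ → ℝ} (hG : Differentiable ℝ G)
    (v : ℝ × (Fin N → ℝ) × ℝ) (i : Fin N)
    (hper : ∀ s y τ, G (s, y + Pi.single i 1, τ) = G (s, y, τ)) :
    ∀ s y τ, fderiv ℝ G (s, y + Pi.single i 1, τ) v = fderiv ℝ G (s, y, τ) v := by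
  intro s y τ
  have h0 : ∀ p : ℝ × (Fin N → ℝ) × ℝ,
      G (p + ((0 : ℝ), Pi.single i 1, (0 : ℝ))) = G p := by
    rintro ⟨p1, p2, p3⟩
    have he : ((p1, p2, p3) : ℝ × (Fin N → ℝ) × ℝ) + ((0 : ℝ), Pi.single i 1, (0 : ℝ))
        = (p1, p2 + Pi.single i 1, p3) := by
      simp [Prod.ext_iff]
    rw [he]
    exact hper p1 p2 p3
  have h := s5_periodic_fderiv hG _ h0 (s, y, τ) v
  have he : ((s, y, τ) : ℝ × (Fin N → ℝ) × ℝ) + ((0 : ℝ), Pi.single i 1, (0 : ℝ))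
      = (s, y + Pi.single i 1, τ) := by simp [Prod.ext_iff]
  rwa [he] at h

theorem s5_P1 {β : (Fin N → ℝ) × ℝ → ℝ} {F : ℝ × (Fin N → ℝ) × ℝ → ℝ}
    (hβ : Continuous β) (hF : ContDiff ℝ (⊤ : ℕ∞) F) (hβF : Differentiable ℝ fun p => β p.2 * F p)
    (s : ℝ) (y : Fin N → ℝ) (τ : ℝ) :
    fderiv ℝ (fun p : ℝ × (Fin N → ℝ) × ℝ => β p.2 * F p) (s, y, τ) s5_eS
      = β (y, τ) * fderiv ℝ F (s, y, τ) s5_eS := by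
  have h2 := s5_hdS hβF s y τ
  have h1 : HasDerivAt (fun z => β (y, τ) * F (z, y, τ))
      (β (y, τ) * fderiv ℝ F (s, y, τ) s5_eS) s :=
    (s5_hdS (hF.differentiable (by simp)) s y τ).const_mul (β (y, τ))
  exact h2.unique h1

theorem s5_P2 {β : (Fin N → ℝ) × ℝ → ℝ} {F : ℝ × (Fin N → ℝ) × ℝ → ℝ}
    (hβ : Differentiable ℝ β) (hF : ContDiff ℝ (⊤ : ℕ∞) F)
    (hβF : Differentiable ℝ fun p => β p.2 * F p)
    (i : Fin N) (s : ℝ) (y : Fin N → ℝ) (τ : ℝ) :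
    fderiv ℝ (fun p : ℝ × (Fin N → ℝ) × ℝ => β p.2 * F p) (s, y, τ) (s5_eY i)
      = fderiv ℝ β (y, τ) ((Pi.single i 1 : Fin N → ℝ), (0 : ℝ)) * F (s, y, τ)
        + β (y, τ) * fderiv ℝ F (s, y, τ) (s5_eY i) := by
  have h2 := s5_hdY hβF i s y τ (y i)
  rw [Function.update_eq_self] at h2
  have hb1 := s5_hdX2 hβ i y τ (y i)
  rw [Function.update_eq_self] at hb1
  have hu := s5_hdY (hF.differentiable (by simp)) i s y τ (y i)
  rw [Function.update_eq_self] at hu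
  have h1 := hb1.mul hu
  exact h2.unique (by simpa [Function.update_eq_self, Pi.mul_def] using h1)

end S5Helpers


def s5_F {N : ℕ} (U : ℝ → (Fin N → ℝ) → ℝ → ℝ) : ℝ × (Fin N → ℝ) × ℝ → ℝ :=
  fun p => U p.1 p.2.1 p.2.2

def s5_G1 {N : ℕ} (U : ℝ → (Fin N → ℝ) → ℝ → ℝ) : ℝ × (Fin N → ℝ) × ℝ → ℝ :=
  fun p => fderiv ℝ (s5_F U) p s5_eS

def s5_GY {N : ℕ} (U : ℝ → (Fin N → ℝ) → ℝ → ℝ) (j : Fin N) : ℝ × (Fin N → ℝ) × ℝ → ℝ :=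
  fun p => fderiv ℝ (s5_F U) p (s5_eY j)

def s5_bk {N : ℕ} (k : Fin N → ℝ) (b : (Fin N → ℝ) → ℝ → (Fin N → ℝ)) :
    (Fin N → ℝ) × ℝ → ℝ := fun q => ∑ i, k i * b q.1 q.2 i

def s5_Gbk {N : ℕ} (k : Fin N → ℝ) (b : (Fin N → ℝ) → ℝ → (Fin N → ℝ))
    (U : ℝ → (Fin N → ℝ) → ℝ → ℝ) : ℝ × (Fin N → ℝ) × ℝ → ℝ :=
  fun p => s5_bk k b p.2 * s5_F U p

def s5_Gb {N : ℕ} (b : (Fin N → ℝ) → ℝ → (Fin N → ℝ)) (i : Fin N)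
    (U : ℝ → (Fin N → ℝ) → ℝ → ℝ) : ℝ × (Fin N → ℝ) × ℝ → ℝ :=
  fun p => b p.2.1 p.2.2 i * s5_F U p

section EqLemmas

variable {N : ℕ} {U : ℝ → (Fin N → ℝ) → ℝ → ℝ}
variable {b : (Fin N → ℝ) → ℝ → (Fin N → ℝ)} {k : Fin N → ℝ}

theorem s5_smooth_G1 (hF : ContDiff ℝ (⊤ : ℕ∞) (s5_F U)) : ContDiff ℝ (⊤ : ℕ∞) (s5_G1 U) :=
  s5_contDiff_dir hF s5_eS

theorem s5_smooth_GY (hF : ContDiff ℝ (⊤ : ℕ∞) (s5_F U)) (j : Fin N) : ContDiff ℝ (⊤ : ℕ∞) (s5_GY U j) :=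
  s5_contDiff_dir hF (s5_eY j)

theorem s5_smooth_Bi (hb : ContDiff ℝ (⊤ : ℕ∞) (fun p : (Fin N → ℝ) × ℝ => b p.1 p.2)) (i : Fin N) :
    ContDiff ℝ (⊤ : ℕ∞) (fun q : (Fin N → ℝ) × ℝ => b q.1 q.2 i) :=
  (ContinuousLinearMap.proj (R := ℝ) (φ := fun _ : Fin N => ℝ) i).contDiff.comp hb

theorem s5_smooth_bk (hb : ContDiff ℝ (⊤ : ℕ∞) (fun p : (Fin N → ℝ) × ℝ => b p.1 p.2)) :
    ContDiff ℝ (⊤ : ℕ∞) (s5_bk k b) :=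
  ContDiff.sum fun i _ => contDiff_const.mul (s5_smooth_Bi hb i)

theorem s5_smooth_Gbk (hb : ContDiff ℝ (⊤ : ℕ∞) (fun p : (Fin N → ℝ) × ℝ => b p.1 p.2))
    (hF : ContDiff ℝ (⊤ : ℕ∞) (s5_F U)) : ContDiff ℝ (⊤ : ℕ∞) (s5_Gbk k b U) :=
  ((s5_smooth_bk hb).comp contDiff_snd).mul hF

theorem s5_smooth_Gb (hb : ContDiff ℝ (⊤ : ℕ∞) (fun p : (Fin N → ℝ) × ℝ => b p.1 p.2))
    (hF : ContDiff ℝ (⊤ : ℕ∞) (s5_F U)) (i : Fin N) : ContDiff ℝ (⊤ : ℕ∞) (s5_Gb b i U) :=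
  ((s5_smooth_Bi hb i).comp contDiff_snd).mul hF

theorem s5_eqS (hF : ContDiff ℝ (⊤ : ℕ∞) (s5_F U)) (s : ℝ) (y : Fin N → ℝ) (τ : ℝ) :
    pdS U s y τ = s5_G1 U (s, y, τ) :=
  (s5_hdS (hF.differentiable (by simp)) s y τ).deriv

theorem s5_eqT (hF : ContDiff ℝ (⊤ : ℕ∞) (s5_F U)) (s : ℝ) (y : Fin N → ℝ) (τ : ℝ) :
    pdTau U s y τ = fderiv ℝ (s5_F U) (s, y, τ) s5_eT :=
  (s5_hdT (hF.differentiable (by simp)) s y τ).deriv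

theorem s5_eqY (hF : ContDiff ℝ (⊤ : ℕ∞) (s5_F U)) (i : Fin N) (s : ℝ) (y : Fin N → ℝ) (τ : ℝ) :
    pdY i U s y τ = s5_GY U i (s, y, τ) := by
  have h := (s5_hdY (hF.differentiable (by simp)) i s y τ (y i)).deriv
  rw [Function.update_eq_self] at h
  exact h

theorem s5_eqSS (hF : ContDiff ℝ (⊤ : ℕ∞) (s5_F U)) (s : ℝ) (y : Fin N → ℝ) (τ : ℝ) :
    pdS (pdS U) s y τ = fderiv ℝ (s5_G1 U) (s, y, τ) s5_eS := by
  have hfun : (fun z => pdS U z y τ) = fun z => s5_G1 U (z, y, τ) :=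
    funext fun z => s5_eqS hF z y τ
  show deriv (fun z => pdS U z y τ) s = _
  rw [hfun]
  exact (s5_hdS ((s5_smooth_G1 hF).differentiable (by simp)) s y τ).deriv

theorem s5_eqYS (hF : ContDiff ℝ (⊤ : ℕ∞) (s5_F U)) (i : Fin N) (s : ℝ) (y : Fin N → ℝ) (τ : ℝ) :
    pdY i (pdS U) s y τ = fderiv ℝ (s5_G1 U) (s, y, τ) (s5_eY i) := by
  have hfun : (fun z => pdS U s (Function.update y i z) τ)
      = fun z => s5_G1 U (s, Function.update y i z, τ) :=
    funext fun z => s5_eqS hF s (Function.update y i z) τ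
  show deriv (fun z => pdS U s (Function.update y i z) τ) (y i) = _
  rw [hfun]
  have h := (s5_hdY ((s5_smooth_G1 hF).differentiable (by simp)) i s y τ (y i)).deriv
  rw [Function.update_eq_self] at h
  exact h

theorem s5_eqYY (hF : ContDiff ℝ (⊤ : ℕ∞) (s5_F U)) (i j : Fin N) (s : ℝ) (y : Fin N → ℝ) (τ : ℝ) :
    pdY i (pdY j U) s y τ = fderiv ℝ (s5_GY U j) (s, y, τ) (s5_eY i) := by
  have hfun : (fun z => pdY j U s (Function.update y i z) τ)
      = fun z => s5_GY U j (s, Function.update y i z, τ) :=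
    funext fun z => s5_eqY hF j s (Function.update y i z) τ
  show deriv (fun z => pdY j U s (Function.update y i z) τ) (y i) = _
  rw [hfun]
  have h := (s5_hdY ((s5_smooth_GY hF j).differentiable (by simp)) i s y τ (y i)).deriv
  rw [Function.update_eq_self] at h
  exact h

theorem s5_bterm (hb : IsAdmissibleField b) (hF : ContDiff ℝ (⊤ : ℕ∞) (s5_F U))
    (s : ℝ) (y : Fin N → ℝ) (τ : ℝ) :
    ∑ i, b y τ i * (k i * pdS U s y τ + pdY i U s y τ)
      = fderiv ℝ (s5_Gbk k b U) (s, y, τ) s5_eS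
        + ∑ i, fderiv ℝ (s5_Gb b i U) (s, y, τ) (s5_eY i) := by
  have hBs := hb.1
  have step1 : fderiv ℝ (s5_Gbk k b U) (s, y, τ) s5_eS
      = s5_bk k b (y, τ) * fderiv ℝ (s5_F U) (s, y, τ) s5_eS :=
    s5_P1 (s5_smooth_bk hBs).continuous hF
      (((s5_smooth_Gbk hBs hF)).differentiable (by simp)) s y τ
  have step2 : ∀ i : Fin N, fderiv ℝ (s5_Gb b i U) (s, y, τ) (s5_eY i)
      = fderiv ℝ (fun q : (Fin N → ℝ) × ℝ => b q.1 q.2 i) (y, τ)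
          ((Pi.single i 1 : Fin N → ℝ), (0 : ℝ)) * s5_F U (s, y, τ)
        + b y τ i * fderiv ℝ (s5_F U) (s, y, τ) (s5_eY i) := fun i =>
    s5_P2 ((s5_smooth_Bi hBs i).differentiable (by simp)) hF
      ((s5_smooth_Gb hBs hF i).differentiable (by simp)) i s y τ
  have hdiv : ∑ i, fderiv ℝ (fun q : (Fin N → ℝ) × ℝ => b q.1 q.2 i) (y, τ)
      ((Pi.single i 1 : Fin N → ℝ), (0 : ℝ)) = 0 := by
    have h1 : ∑ i, fderiv ℝ (fun q : (Fin N → ℝ) × ℝ => b q.1 q.2 i) (y, τ)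
        ((Pi.single i 1 : Fin N → ℝ), (0 : ℝ))
        = ∑ i, pdX i (fun x' t' => b x' t' i) y τ :=
      Finset.sum_congr rfl fun i _ =>
        (s5_pdX_eq ((s5_smooth_Bi hBs i).differentiable (by simp)) i y τ).symm
    exact h1.trans (hb.2.2.2.1 y τ)
  calc ∑ i, b y τ i * (k i * pdS U s y τ + pdY i U s y τ)
      = ∑ i, (k i * b y τ i * s5_G1 U (s, y, τ)
          + b y τ i * s5_GY U i (s, y, τ)) := by
        refine Finset.sum_congr rfl fun i _ => ?_
        rw [s5_eqS hF s y τ, s5_eqY hF i s y τ]; ring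
    _ = (∑ i, k i * b y τ i) * s5_G1 U (s, y, τ)
          + ∑ i, b y τ i * s5_GY U i (s, y, τ) := by
        rw [Finset.sum_add_distrib, Finset.sum_mul]
    _ = _ := by
        rw [step1]
        have : ∑ i, fderiv ℝ (s5_Gb b i U) (s, y, τ) (s5_eY i)
            = ∑ i, b y τ i * fderiv ℝ (s5_F U) (s, y, τ) (s5_eY i) := by
          rw [show (∑ i, fderiv ℝ (s5_Gb b i U) (s, y, τ) (s5_eY i))
              = ∑ i, (fderiv ℝ (fun q : (Fin N → ℝ) × ℝ => b q.1 q.2 i) (y, τ)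
                  ((Pi.single i 1 : Fin N → ℝ), (0 : ℝ)) * s5_F U (s, y, τ)
                + b y τ i * fderiv ℝ (s5_F U) (s, y, τ) (s5_eY i))
            from Finset.sum_congr rfl fun i _ => step2 i]
          rw [Finset.sum_add_distrib, ← Finset.sum_mul, hdiv, zero_mul, zero_add]
        rw [this]
        rfl

end EqLemmas


theorem s5_intS_dir {N : ℕ} {G : ℝ × (Fin N → ℝ) × ℝ → ℝ} (hG : ContDiff ℝ (⊤ : ℕ∞) G)
    (v : ℝ × (Fin N → ℝ) × ℝ) (s : ℝ) :
    IntegrableOn (fun q : (Fin N → ℝ) × ℝ => fderiv ℝ G (s, q.1, q.2) v) (s5_S N) :=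
  s5_intS ((s5_contDiff_dir hG v).continuous.comp (by fun_prop))

theorem s5_intS_comp {N : ℕ} {G : ℝ × (Fin N → ℝ) × ℝ → ℝ} (hG : Continuous G) (s : ℝ) :
    IntegrableOn (fun q : (Fin N → ℝ) × ℝ => G (s, q.1, q.2)) (s5_S N) :=
  s5_intS (hG.comp (by fun_prop))

theorem s5_phi_eq {n : ℕ} {U : ℝ → (Fin (n + 1) → ℝ) → ℝ → ℝ}
    {b : (Fin (n + 1) → ℝ) → ℝ → (Fin (n + 1) → ℝ)} {k : Fin (n + 1) → ℝ}
    {f : ℝ → ℝ} {ε c : ℝ}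
    (hb : IsAdmissibleField b) (hF : ContDiff ℝ (⊤ : ℕ∞) (s5_F U)) (hperU : PeriodicYTau U)
    (heq : RegFrontEq b f k ε 1 c U) (s : ℝ) :
    (∫ q in s5_S (n + 1), f (U s q.1 q.2))
      = -(ε + 1) * (∫ q in s5_S (n + 1), fderiv ℝ (s5_G1 U) (s, q.1, q.2) s5_eS)
        - (∫ q in s5_S (n + 1), fderiv ℝ (s5_Gbk k b U) (s, q.1, q.2) s5_eS)
        - c * (∫ q in s5_S (n + 1), fderiv ℝ (s5_F U) (s, q.1, q.2) s5_eS) := by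
  have hG1 := s5_smooth_G1 hF
  have hGbk : ContDiff ℝ (⊤ : ℕ∞) (s5_Gbk k b U) := s5_smooth_Gbk hb.1 hF
  have hGY := fun j => s5_smooth_GY hF j
  have hGb := fun i => s5_smooth_Gb hb.1 hF i
  -- pointwise identity
  have hA : ∀ y τ, f (U s y τ) =
      (fderiv ℝ (s5_F U) (s, y, τ) s5_eT
        - 2 * ∑ i, k i * fderiv ℝ (s5_G1 U) (s, y, τ) (s5_eY i)
        - ∑ i, fderiv ℝ (s5_GY U i) (s, y, τ) (s5_eY i)
        - ∑ i, fderiv ℝ (s5_Gb b i U) (s, y, τ) (s5_eY i))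
      + (-(ε + 1) * fderiv ℝ (s5_G1 U) (s, y, τ) s5_eS)
      + (- fderiv ℝ (s5_Gbk k b U) (s, y, τ) s5_eS)
      + (- (c * fderiv ℝ (s5_F U) (s, y, τ) s5_eS)) := by
    intro y τ
    have h := heq s y τ
    rw [s5_bterm hb hF s y τ] at h
    rw [s5_eqT hF s y τ, s5_eqSS hF s y τ] at h
    simp only [s5_eqYS hF, s5_eqYY hF, s5_eqS hF] at h
    show f (U s y τ) = _ + _ + _ + (-(c * s5_G1 U (s, y, τ)))
    linarith [h]
  -- integrability of the pieces
  have i0 := s5_intS_dir hF s5_eT s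
  have i1 : ∀ i, IntegrableOn
      (fun q : (Fin (n + 1) → ℝ) × ℝ => k i * fderiv ℝ (s5_G1 U) (s, q.1, q.2) (s5_eY i))
      (s5_S (n + 1)) := fun i => (s5_intS_dir hG1 (s5_eY i) s).const_mul _
  have i1s : IntegrableOn (fun q : (Fin (n + 1) → ℝ) × ℝ =>
      ∑ i, k i * fderiv ℝ (s5_G1 U) (s, q.1, q.2) (s5_eY i)) (s5_S (n + 1)) :=
    integrable_finset_sum _ fun i _ => i1 i
  have i1s2 := i1s.const_mul 2
  have i2 : ∀ i, IntegrableOn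
      (fun q : (Fin (n + 1) → ℝ) × ℝ => fderiv ℝ (s5_GY U i) (s, q.1, q.2) (s5_eY i))
      (s5_S (n + 1)) := fun i => s5_intS_dir (hGY i) (s5_eY i) s
  have i2s : IntegrableOn (fun q : (Fin (n + 1) → ℝ) × ℝ =>
      ∑ i, fderiv ℝ (s5_GY U i) (s, q.1, q.2) (s5_eY i)) (s5_S (n + 1)) :=
    integrable_finset_sum _ fun i _ => i2 i
  have i3 : ∀ i, IntegrableOn
      (fun q : (Fin (n + 1) → ℝ) × ℝ => fderiv ℝ (s5_Gb b i U) (s, q.1, q.2) (s5_eY i))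
      (s5_S (n + 1)) := fun i => s5_intS_dir (hGb i) (s5_eY i) s
  have i3s : IntegrableOn (fun q : (Fin (n + 1) → ℝ) × ℝ =>
      ∑ i, fderiv ℝ (s5_Gb b i U) (s, q.1, q.2) (s5_eY i)) (s5_S (n + 1)) :=
    integrable_finset_sum _ fun i _ => i3 i
  have i4 := s5_intS_dir hG1 s5_eS s
  have i5 := s5_intS_dir hGbk s5_eS s
  have i6 := s5_intS_dir hF s5_eS s
  have iT : IntegrableOn (fun q : (Fin (n + 1) → ℝ) × ℝ =>
      (fderiv ℝ (s5_F U) (s, q.1, q.2) s5_eT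
        - 2 * ∑ i, k i * fderiv ℝ (s5_G1 U) (s, q.1, q.2) (s5_eY i)
        - ∑ i, fderiv ℝ (s5_GY U i) (s, q.1, q.2) (s5_eY i)
        - ∑ i, fderiv ℝ (s5_Gb b i U) (s, q.1, q.2) (s5_eY i))) (s5_S (n + 1)) :=
    ((i0.sub i1s2).sub i2s).sub i3s
  have ir1 : IntegrableOn (fun q : (Fin (n + 1) → ℝ) × ℝ =>
      -(ε + 1) * fderiv ℝ (s5_G1 U) (s, q.1, q.2) s5_eS) (s5_S (n + 1)) :=
    i4.const_mul (-(ε + 1))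
  have ir2 : IntegrableOn (fun q : (Fin (n + 1) → ℝ) × ℝ =>
      - fderiv ℝ (s5_Gbk k b U) (s, q.1, q.2) s5_eS) (s5_S (n + 1)) := i5.neg
  have ir3 : IntegrableOn (fun q : (Fin (n + 1) → ℝ) × ℝ =>
      - (c * fderiv ℝ (s5_F U) (s, q.1, q.2) s5_eS)) (s5_S (n + 1)) :=
    (i6.const_mul c).neg
  have iTr1 : IntegrableOn (fun q : (Fin (n + 1) → ℝ) × ℝ =>
      (fderiv ℝ (s5_F U) (s, q.1, q.2) s5_eT
        - 2 * ∑ i, k i * fderiv ℝ (s5_G1 U) (s, q.1, q.2) (s5_eY i)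
        - ∑ i, fderiv ℝ (s5_GY U i) (s, q.1, q.2) (s5_eY i)
        - ∑ i, fderiv ℝ (s5_Gb b i U) (s, q.1, q.2) (s5_eY i))
      + (-(ε + 1) * fderiv ℝ (s5_G1 U) (s, q.1, q.2) s5_eS)) (s5_S (n + 1)) := iT.add ir1
  have iTr12 : IntegrableOn (fun q : (Fin (n + 1) → ℝ) × ℝ =>
      (fderiv ℝ (s5_F U) (s, q.1, q.2) s5_eT
        - 2 * ∑ i, k i * fderiv ℝ (s5_G1 U) (s, q.1, q.2) (s5_eY i)
        - ∑ i, fderiv ℝ (s5_GY U i) (s, q.1, q.2) (s5_eY i)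
        - ∑ i, fderiv ℝ (s5_Gb b i U) (s, q.1, q.2) (s5_eY i))
      + (-(ε + 1) * fderiv ℝ (s5_G1 U) (s, q.1, q.2) s5_eS)
      + (- fderiv ℝ (s5_Gbk k b U) (s, q.1, q.2) s5_eS)) (s5_S (n + 1)) := iTr1.add ir2
  -- zero integrals
  have z0 : (∫ q in s5_S (n + 1), fderiv ℝ (s5_F U) (s, q.1, q.2) s5_eT) = 0 :=
    s5_tau_zero hF (fun s' y τ => hperU.2 s' y τ) s
  have perG1 : ∀ i : Fin (n + 1), ∀ (s' : ℝ) (y : Fin (n + 1) → ℝ) (τ : ℝ),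
      s5_G1 U (s', y + Pi.single i 1, τ) = s5_G1 U (s', y, τ) := fun i =>
    s5_per_push (hF.differentiable (by simp)) s5_eS i (fun s' y τ => hperU.1 s' y τ i)
  have z1 : ∀ i : Fin (n + 1),
      (∫ q in s5_S (n + 1), fderiv ℝ (s5_G1 U) (s, q.1, q.2) (s5_eY i)) = 0 := fun i =>
    s5_y_zero hG1 i (perG1 i) s
  have perGY : ∀ i j : Fin (n + 1), ∀ (s' : ℝ) (y : Fin (n + 1) → ℝ) (τ : ℝ),
      s5_GY U j (s', y + Pi.single i 1, τ) = s5_GY U j (s', y, τ) := fun i j =>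
    s5_per_push (hF.differentiable (by simp)) (s5_eY j) i (fun s' y τ => hperU.1 s' y τ i)
  have z2 : ∀ i : Fin (n + 1),
      (∫ q in s5_S (n + 1), fderiv ℝ (s5_GY U i) (s, q.1, q.2) (s5_eY i)) = 0 := fun i =>
    s5_y_zero (hGY i) i (perGY i i) s
  have perGb : ∀ i : Fin (n + 1), ∀ (s' : ℝ) (y : Fin (n + 1) → ℝ) (τ : ℝ),
      s5_Gb b i U (s', y + Pi.single i 1, τ) = s5_Gb b i U (s', y, τ) := by
    intro i s' y τ
    show b (y + Pi.single i 1) τ i * U s' (y + Pi.single i 1) τ = b y τ i * U s' y τ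
    rw [hb.2.1 y τ i, hperU.1 s' y τ i]
  have z3 : ∀ i : Fin (n + 1),
      (∫ q in s5_S (n + 1), fderiv ℝ (s5_Gb b i U) (s, q.1, q.2) (s5_eY i)) = 0 := fun i =>
    s5_y_zero (hGb i) i (perGb i) s
  -- split the integral
  have hfun : (fun q : (Fin (n + 1) → ℝ) × ℝ => f (U s q.1 q.2))
      = fun q : (Fin (n + 1) → ℝ) × ℝ =>
      (fderiv ℝ (s5_F U) (s, q.1, q.2) s5_eT
        - 2 * ∑ i, k i * fderiv ℝ (s5_G1 U) (s, q.1, q.2) (s5_eY i)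
        - ∑ i, fderiv ℝ (s5_GY U i) (s, q.1, q.2) (s5_eY i)
        - ∑ i, fderiv ℝ (s5_Gb b i U) (s, q.1, q.2) (s5_eY i))
      + (-(ε + 1) * fderiv ℝ (s5_G1 U) (s, q.1, q.2) s5_eS)
      + (- fderiv ℝ (s5_Gbk k b U) (s, q.1, q.2) s5_eS)
      + (- (c * fderiv ℝ (s5_F U) (s, q.1, q.2) s5_eS)) := funext fun q => hA q.1 q.2
  rw [hfun]
  rw [integral_add iTr12 ir3, integral_add iTr1 ir2, integral_add iT ir1]
  have hs1 : (∫ q in s5_S (n + 1),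
      ∑ i, k i * fderiv ℝ (s5_G1 U) (s, q.1, q.2) (s5_eY i)) = 0 := by
    rw [integral_finset_sum _ (fun i _ => i1 i)]
    exact Finset.sum_eq_zero fun i _ => by rw [integral_const_mul, z1 i, mul_zero]
  have hs2 : (∫ q in s5_S (n + 1),
      ∑ i, fderiv ℝ (s5_GY U i) (s, q.1, q.2) (s5_eY i)) = 0 := by
    rw [integral_finset_sum _ (fun i _ => i2 i)]
    exact Finset.sum_eq_zero fun i _ => z2 i
  have hs3 : (∫ q in s5_S (n + 1),
      ∑ i, fderiv ℝ (s5_Gb b i U) (s, q.1, q.2) (s5_eY i)) = 0 := by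
    rw [integral_finset_sum _ (fun i _ => i3 i)]
    exact Finset.sum_eq_zero fun i _ => z3 i
  have hT : (∫ q in s5_S (n + 1),
      (fderiv ℝ (s5_F U) (s, q.1, q.2) s5_eT
        - 2 * ∑ i, k i * fderiv ℝ (s5_G1 U) (s, q.1, q.2) (s5_eY i)
        - ∑ i, fderiv ℝ (s5_GY U i) (s, q.1, q.2) (s5_eY i)
        - ∑ i, fderiv ℝ (s5_Gb b i U) (s, q.1, q.2) (s5_eY i))) = 0 := by
    have j1 : IntegrableOn (fun q : (Fin (n + 1) → ℝ) × ℝ =>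
        fderiv ℝ (s5_F U) (s, q.1, q.2) s5_eT
          - 2 * ∑ i, k i * fderiv ℝ (s5_G1 U) (s, q.1, q.2) (s5_eY i)) (s5_S (n + 1)) :=
      i0.sub i1s2
    have j2 : IntegrableOn (fun q : (Fin (n + 1) → ℝ) × ℝ =>
        fderiv ℝ (s5_F U) (s, q.1, q.2) s5_eT
          - 2 * ∑ i, k i * fderiv ℝ (s5_G1 U) (s, q.1, q.2) (s5_eY i)
          - ∑ i, fderiv ℝ (s5_GY U i) (s, q.1, q.2) (s5_eY i)) (s5_S (n + 1)) := j1.sub i2s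
    rw [integral_sub j2 i3s, integral_sub j1 i2s, integral_sub i0 i1s2, z0, hs2, hs3]
    have : (∫ q in s5_S (n + 1),
        2 * ∑ i, k i * fderiv ℝ (s5_G1 U) (s, q.1, q.2) (s5_eY i)) = 0 := by
      rw [integral_const_mul, hs1, mul_zero]
    rw [this]
    ring
  rw [hT, integral_const_mul, integral_neg, integral_neg, integral_const_mul]
  ring

/-- the speed identity `c = ∫_{ℝ×Q×(0,1)} f(U) ds dy dτ` for a classical
solution of the regularized traveling-front problem with `σ = 1`. -/
theorem statement5 {N : ℕ} (hN : 1 ≤ N) (k : Fin N → ℝ) (hk : IsUnitVector k)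
    (b : (Fin N → ℝ) → ℝ → (Fin N → ℝ)) (hb : IsAdmissibleField b)
    (f : ℝ → ℝ) (hf : ContDiff ℝ 1 f) (hf0 : f 0 = 0) (hf1 : f 1 = 0)
    (ε : ℝ) (hε : 0 ≤ ε)
    (c : ℝ) (U : ℝ → (Fin N → ℝ) → ℝ → ℝ)
    (hU : IsRegFront b f k ε 1 c U)
    (hUs : IntegrableOn (fun p : ℝ × (Fin N → ℝ) × ℝ => pdS U p.1 p.2.1 p.2.2) (cell N))
    (hfint : IntegrableOn (fun p : ℝ × (Fin N → ℝ) × ℝ => f (U p.1 p.2.1 p.2.2)) (cell N))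
    (hvanish : DerivsVanish U) :
    c = ∫ p in cell N, f (U p.1 p.2.1 p.2.2) := by
  obtain ⟨n, rfl⟩ : ∃ n, N = n + 1 := ⟨N - 1, (Nat.succ_pred_eq_of_pos hN).symm⟩
  obtain ⟨hF0, hperU, heq, hlim⟩ := hU
  have hF : ContDiff ℝ (⊤ : ℕ∞) (s5_F U) := hF0
  have hG1 : ContDiff ℝ (⊤ : ℕ∞) (s5_G1 U) := s5_smooth_G1 hF
  have hGbk : ContDiff ℝ (⊤ : ℕ∞) (s5_Gbk k b U) := s5_smooth_Gbk hb.1 hF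
  -- derivative of ψ
  have hψd : ∀ s : ℝ, HasDerivAt (fun s' : ℝ =>
      -(ε + 1) * (∫ q in s5_S (n + 1), s5_G1 U (s', q.1, q.2))
        - (∫ q in s5_S (n + 1), s5_Gbk k b U (s', q.1, q.2))
        - c * (∫ q in s5_S (n + 1), s5_F U (s', q.1, q.2)))
      (∫ q in s5_S (n + 1), f (U s q.1 q.2)) s := by
    intro s
    have h1 := s5_hasDerivAt_intS hG1 s
    have h2 := s5_hasDerivAt_intS hGbk s
    have h3 := s5_hasDerivAt_intS hF s
    have hd := ((h1.const_mul (-(ε + 1))).sub h2).sub (h3.const_mul c)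
    have hval := s5_phi_eq (k := k) hb hF hperU heq s
    rw [hval]
    exact hd
  -- bound for bk
  have hbkc : Continuous (s5_bk k b) := (s5_smooth_bk hb.1).continuous
  obtain ⟨Cb, hCb⟩ := (isCompact_Icc.prod isCompact_Icc).exists_bound_of_continuousOn
    (hbkc.continuousOn (s := Icc (0 : Fin (n + 1) → ℝ) 1 ×ˢ Icc (0 : ℝ) 1))
  have hCb0 : 0 ≤ Cb :=
    le_trans (norm_nonneg _) (hCb (0, 0) ⟨⟨le_rfl, zero_le_one⟩, ⟨le_rfl, zero_le_one⟩⟩)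
  have hSsub : s5_S (n + 1) ⊆ Icc (0 : Fin (n + 1) → ℝ) 1 ×ˢ Icc (0 : ℝ) 1 :=
    prod_mono_right Ioo_subset_Icc_self
  have hbkb : ∀ q ∈ s5_S (n + 1), |s5_bk k b q| ≤ Cb := fun q hq => hCb q (hSsub hq)
  -- limits of the three integrals
  have t1top : Tendsto (fun s => ∫ q in s5_S (n + 1), s5_G1 U (s, q.1, q.2)) atTop (𝓝 0) := by
    have h := s5_tendsto_int (N := n + 1) (l := atTop)
      (g := fun s q => s5_G1 U (s, q.1, q.2)) (L := fun _ => (0 : ℝ))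
      (fun s => s5_intS_comp hG1.continuous s) (integrableOn_zero) ?_
    · simpa using h
    · intro η hη
      obtain ⟨M, _, hM⟩ := hvanish η hη
      filter_upwards [Ici_mem_atTop M] with s hs q _
      have habs : M ≤ |s| := le_trans hs (le_abs_self s)
      have h2 := (hM s q.1 q.2 habs).1
      rw [s5_eqS hF s q.1 q.2] at h2
      rw [sub_zero]
      exact h2.le
  have t1bot : Tendsto (fun s => ∫ q in s5_S (n + 1), s5_G1 U (s, q.1, q.2)) atBot (𝓝 0) := by
    have h := s5_tendsto_int (N := n + 1) (l := atBot)
      (g := fun s q => s5_G1 U (s, q.1, q.2)) (L := fun _ => (0 : ℝ))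
      (fun s => s5_intS_comp hG1.continuous s) (integrableOn_zero) ?_
    · simpa using h
    · intro η hη
      obtain ⟨M, _, hM⟩ := hvanish η hη
      filter_upwards [Iic_mem_atBot (-M)] with s hs q _
      have hs' : s ≤ -M := hs
      have habs : M ≤ |s| := le_trans (by linarith) (neg_le_abs s)
      have h2 := (hM s q.1 q.2 habs).1
      rw [s5_eqS hF s q.1 q.2] at h2
      rw [sub_zero]
      exact h2.le
  have t3top : Tendsto (fun s => ∫ q in s5_S (n + 1), s5_F U (s, q.1, q.2)) atTop (𝓝 0) := by
    have h := s5_tendsto_int (N := n + 1) (l := atTop)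
      (g := fun s q => s5_F U (s, q.1, q.2)) (L := fun _ => (0 : ℝ))
      (fun s => s5_intS_comp hF.continuous s) (integrableOn_zero) ?_
    · simpa using h
    · intro η hη
      obtain ⟨M, hM⟩ := hlim.1 η hη
      filter_upwards [Ici_mem_atTop M] with s hs q _
      rw [sub_zero]
      exact (hM s q.1 q.2 hs).le
  have hone : (∫ _q in s5_S (n + 1), (1 : ℝ)) = 1 := by
    rw [setIntegral_const, measureReal_def, s5_measS]
    simp
  have t3bot : Tendsto (fun s => ∫ q in s5_S (n + 1), s5_F U (s, q.1, q.2)) atBot (𝓝 1) := by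
    have h := s5_tendsto_int (N := n + 1) (l := atBot)
      (g := fun s q => s5_F U (s, q.1, q.2)) (L := fun _ => (1 : ℝ))
      (fun s => s5_intS_comp hF.continuous s) (integrableOn_const ?_) ?_
    · rwa [hone] at h
    · rw [s5_measS]; exact ENNReal.one_ne_top
    · intro η hη
      obtain ⟨M, hM⟩ := hlim.2 η hη
      filter_upwards [Iic_mem_atBot M] with s hs q _
      exact (hM s q.1 q.2 hs).le
  have hbk0 : (∫ q in s5_S (n + 1), s5_bk k b q) = 0 := by
    have hco : ∀ i : Fin (n + 1), Continuous
        (fun q : (Fin (n + 1) → ℝ) × ℝ => k i * b q.1 q.2 i) := fun i =>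
      continuous_const.mul (s5_smooth_Bi hb.1 i).continuous
    have hsum : (∫ q in s5_S (n + 1), s5_bk k b q)
        = ∑ i, ∫ q in s5_S (n + 1), k i * b q.1 q.2 i := by
      show (∫ q in s5_S (n + 1), ∑ i, k i * b q.1 q.2 i) = _
      exact integral_finset_sum _ fun i _ => s5_intS (hco i)
    rw [hsum]
    refine Finset.sum_eq_zero fun i _ => ?_
    rw [integral_const_mul]
    have heq2 : (∫ q in s5_S (n + 1), b q.1 q.2 i)
        = ∫ x in Icc (0 : Fin (n + 1) → ℝ) 1, ∫ t in Ioo (0 : ℝ) 1, b x t i :=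
      s5_fubiniS (s5_smooth_Bi hb.1 i).continuous
    rw [heq2, hb.2.2.2.2 i, mul_zero]
  have t2top : Tendsto (fun s => ∫ q in s5_S (n + 1), s5_Gbk k b U (s, q.1, q.2))
      atTop (𝓝 0) := by
    have h := s5_tendsto_int (N := n + 1) (l := atTop)
      (g := fun s q => s5_Gbk k b U (s, q.1, q.2)) (L := fun _ => (0 : ℝ))
      (fun s => s5_intS_comp hGbk.continuous s) (integrableOn_zero) ?_
    · simpa using h
    · intro η hη
      have hη' : 0 < η / (Cb + 1) := by positivity
      obtain ⟨M, hM⟩ := hlim.1 _ hη'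
      filter_upwards [Ici_mem_atTop M] with s hs q hq
      have h1 : |s5_bk k b q| ≤ Cb := hbkb q hq
      have h2 : |U s q.1 q.2| ≤ η / (Cb + 1) := (hM s q.1 q.2 hs).le
      have h3 : |s5_Gbk k b U (s, q.1, q.2) - 0| = |s5_bk k b q| * |U s q.1 q.2| := by
        rw [sub_zero]
        show |s5_bk k b (q.1, q.2) * U s q.1 q.2| = _
        rw [Prod.mk.eta, abs_mul]
      rw [h3]
      calc |s5_bk k b q| * |U s q.1 q.2| ≤ Cb * (η / (Cb + 1)) :=
            mul_le_mul h1 h2 (abs_nonneg _) hCb0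
        _ = (Cb / (Cb + 1)) * η := by ring
        _ ≤ 1 * η := by
            have hle : Cb / (Cb + 1) ≤ 1 := (div_le_one (by linarith)).2 (by linarith)
            exact mul_le_mul_of_nonneg_right hle hη.le
        _ = η := one_mul η
  have t2bot : Tendsto (fun s => ∫ q in s5_S (n + 1), s5_Gbk k b U (s, q.1, q.2))
      atBot (𝓝 0) := by
    have h := s5_tendsto_int (N := n + 1) (l := atBot)
      (g := fun s q => s5_Gbk k b U (s, q.1, q.2)) (L := s5_bk k b)
      (fun s => s5_intS_comp hGbk.continuous s) (s5_intS hbkc) ?_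
    · rwa [hbk0] at h
    · intro η hη
      have hη' : 0 < η / (Cb + 1) := by positivity
      obtain ⟨M, hM⟩ := hlim.2 _ hη'
      filter_upwards [Iic_mem_atBot M] with s hs q hq
      have h1 : |s5_bk k b q| ≤ Cb := hbkb q hq
      have h2 : |U s q.1 q.2 - 1| ≤ η / (Cb + 1) := (hM s q.1 q.2 hs).le
      have h3 : |s5_Gbk k b U (s, q.1, q.2) - s5_bk k b q|
          = |s5_bk k b q| * |U s q.1 q.2 - 1| := by
        show |s5_bk k b (q.1, q.2) * U s q.1 q.2 - s5_bk k b q| = _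
        rw [Prod.mk.eta, ← abs_mul, mul_sub, mul_one]
      rw [h3]
      calc |s5_bk k b q| * |U s q.1 q.2 - 1| ≤ Cb * (η / (Cb + 1)) :=
            mul_le_mul h1 h2 (abs_nonneg _) hCb0
        _ = (Cb / (Cb + 1)) * η := by ring
        _ ≤ 1 * η := by
            have hle : Cb / (Cb + 1) ≤ 1 := (div_le_one (by linarith)).2 (by linarith)
            exact mul_le_mul_of_nonneg_right hle hη.le
        _ = η := one_mul η
  -- limits of ψ
  have hψtop : Tendsto (fun s' : ℝ =>
      -(ε + 1) * (∫ q in s5_S (n + 1), s5_G1 U (s', q.1, q.2))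
        - (∫ q in s5_S (n + 1), s5_Gbk k b U (s', q.1, q.2))
        - c * (∫ q in s5_S (n + 1), s5_F U (s', q.1, q.2))) atTop (𝓝 0) := by
    have h := ((t1top.const_mul (-(ε + 1))).sub t2top).sub (t3top.const_mul c)
    simpa using h
  have hψbot : Tendsto (fun s' : ℝ =>
      -(ε + 1) * (∫ q in s5_S (n + 1), s5_G1 U (s', q.1, q.2))
        - (∫ q in s5_S (n + 1), s5_Gbk k b U (s', q.1, q.2))
        - c * (∫ q in s5_S (n + 1), s5_F U (s', q.1, q.2))) atBot (𝓝 (-c)) := by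
    have h := ((t1bot.const_mul (-(ε + 1))).sub t2bot).sub (t3bot.const_mul c)
    simpa using h
  -- integrability of φ
  have hfint' : Integrable (fun p : ℝ × ((Fin (n + 1) → ℝ) × ℝ) => f (U p.1 p.2.1 p.2.2))
      ((volume : Measure ℝ).prod
        ((volume : Measure ((Fin (n + 1) → ℝ) × ℝ)).restrict (s5_S (n + 1)))) := by
    have h := hfint
    rw [IntegrableOn, show cell (n + 1) = (univ : Set ℝ) ×ˢ s5_S (n + 1) from rfl,
      s5_restrictCell] at h
    exact h
  have hφint : Integrable (fun s => ∫ q in s5_S (n + 1), f (U s q.1 q.2)) volume :=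
    hfint'.integral_prod_left
  have hIcell : (∫ p in cell (n + 1), f (U p.1 p.2.1 p.2.2))
      = ∫ s, ∫ q in s5_S (n + 1), f (U s q.1 q.2) := by
    have hm : (volume : Measure (ℝ × (Fin (n + 1) → ℝ) × ℝ)).restrict (cell (n + 1))
        = (volume : Measure ℝ).prod
          ((volume : Measure ((Fin (n + 1) → ℝ) × ℝ)).restrict (s5_S (n + 1))) := by
      rw [show cell (n + 1) = (univ : Set ℝ) ×ˢ s5_S (n + 1) from rfl, s5_restrictCell]
    rw [hm]
    exact integral_prod _ hfint'
  -- improper FTC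
  have hIoi := integral_Ioi_of_hasDerivAt_of_tendsto' (a := 0)
    (fun x _ => hψd x) hφint.integrableOn hψtop
  have hIic := integral_Iic_of_hasDerivAt_of_tendsto (a := 0)
    (hψd 0).continuousAt.continuousWithinAt (fun x _ => hψd x)
    hφint.integrableOn hψbot
  have htot := intervalIntegral.integral_Iic_add_Ioi (b := (0 : ℝ))
    (hφint.integrableOn) (hφint.integrableOn)
  rw [hIcell, ← htot, hIoi, hIic]
  ring
end
end

section
/- Let f be a C¹ function with f(0)=f(1)=0 and f(u) ≥ 0 for u ∈ [0,1], let ε ≥ 0, and let (U,c) be a classical solution of the regularized traveling-front problem with parameters (ε, σ=1) such that 0 < U < 1, U_s and |k U_s + ∇_y U| are square-integrable over ℝ×Q×(0,1), f(U) is integrable with ∫ f(U) = c, and the first and second derivatives of U converge uniformly to 0 as s → ±∞. Then ∫_{ℝ×Q×(0,1)} |k U_s + ∇_y U|² ds dy dτ ≤ c/2. -/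
open MeasureTheory Filter Set

noncomputable section

variable {N : ℕ}

open Topology

namespace St6
variable {N : ℕ}

abbrev E (N : ℕ) := ℝ × (Fin N → ℝ) × ℝ

def eS : E N := (1, 0, 0)
def eY (i : Fin N) : E N := (0, Pi.single i 1, 0)
def eT : E N := (0, 0, 1)

/-- derivative of `z ↦ update y i z` -/
lemma hasDerivAt_update (y : Fin N → ℝ) (i : Fin N) (z : ℝ) :
    HasDerivAt (fun z => Function.update y i z) (Pi.single i 1) z := by
  rw [hasDerivAt_pi]
  intro j
  rcases eq_or_ne j i with rfl | hj
  · simpa [Function.update_self] using (hasDerivAt_id' z)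
  · simpa [Function.update_of_ne hj, Pi.single_eq_of_ne hj] using (hasDerivAt_const z (y j))

lemma hasDerivAt_sliceS (H : E N → ℝ) (hH : Differentiable ℝ H) (s : ℝ) (y : Fin N → ℝ) (τ : ℝ) :
    HasDerivAt (fun z => H (z, y, τ)) (fderiv ℝ H (s, y, τ) eS) s := by
  have hγ : HasDerivAt (fun z : ℝ => ((z, y, τ) : E N)) eS s := by
    exact (hasDerivAt_id s).prodMk ((hasDerivAt_const s y).prodMk (hasDerivAt_const s τ))
  exact (hH (s, y, τ)).hasFDerivAt.comp_hasDerivAt s hγ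

lemma hasDerivAt_sliceY (H : E N → ℝ) (hH : Differentiable ℝ H) (i : Fin N)
    (s : ℝ) (y : Fin N → ℝ) (τ : ℝ) :
    HasDerivAt (fun z => H (s, Function.update y i z, τ)) (fderiv ℝ H (s, y, τ) (eY i)) (y i) := by
  have hγ : HasDerivAt (fun z : ℝ => ((s, Function.update y i z, τ) : E N)) (eY i) (y i) :=
    (hasDerivAt_const _ s).prodMk ((hasDerivAt_update y i (y i)).prodMk (hasDerivAt_const _ τ))
  have := (hH (s, Function.update y i (y i), τ)).hasFDerivAt.comp_hasDerivAt (y i) hγ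
  simpa [Function.update_eq_self, Function.comp_def] using this

lemma hasDerivAt_sliceT (H : E N → ℝ) (hH : Differentiable ℝ H) (s : ℝ) (y : Fin N → ℝ) (τ : ℝ) :
    HasDerivAt (fun z => H (s, y, z)) (fderiv ℝ H (s, y, τ) eT) τ := by
  have hγ : HasDerivAt (fun z : ℝ => ((s, y, z) : E N)) eT τ :=
    (hasDerivAt_const _ s).prodMk ((hasDerivAt_const _ y).prodMk (hasDerivAt_id τ))
  exact (hH (s, y, τ)).hasFDerivAt.comp_hasDerivAt τ hγ

/-- pi-space slice -/
lemma hasDerivAt_sliceP (g : (Fin N → ℝ) → ℝ) (hg : Differentiable ℝ g) (i : Fin N)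
    (y : Fin N → ℝ) :
    HasDerivAt (fun z => g (Function.update y i z)) (fderiv ℝ g y (Pi.single i 1)) (y i) := by
  have := (hg (Function.update y i (y i))).hasFDerivAt.comp_hasDerivAt (y i)
    (hasDerivAt_update y i (y i))
  simpa [Function.update_eq_self, Function.comp_def] using this



variable {N : ℕ}
def D1 (H : E N → ℝ) (v : E N) : E N → ℝ := fun p => fderiv ℝ H p v
def D2 (H : E N → ℝ) (v w : E N) : E N → ℝ := fun p => fderiv ℝ (D1 H w) p v

lemma contDiff_D1 {H : E N → ℝ} (hH : ContDiff ℝ (⊤ : ℕ∞) H) (v : E N) : ContDiff ℝ (⊤ : ℕ∞) (D1 H v) := by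
  have h1 : ContDiff ℝ (⊤ : ℕ∞) (fderiv ℝ H) := hH.fderiv_right (by simp)
  exact h1.clm_apply contDiff_const

lemma contDiff_D2 {H : E N → ℝ} (hH : ContDiff ℝ (⊤ : ℕ∞) H) (v w : E N) :
    ContDiff ℝ (⊤ : ℕ∞) (D2 H v w) := contDiff_D1 (contDiff_D1 hH w) v

lemma D2_symm {H : E N → ℝ} (hH : ContDiff ℝ (⊤ : ℕ∞) H) (v w : E N) (p : E N) :
    D2 H v w p = D2 H w v p := by
  have hd : Differentiable ℝ H := hH.differentiable (by simp)
  have hfd : Differentiable ℝ (fderiv ℝ H) := (hH.fderiv_right (m := (⊤ : ℕ∞)) (by simp)).differentiable (by simp)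
  have key : ∀ u z : E N, D2 H u z p = fderiv ℝ (fderiv ℝ H) p u z := by
    intro u z
    have : fderiv ℝ (fun q => fderiv ℝ H q z) p =
        ((fderiv ℝ (fderiv ℝ H) p).flip z) := by
      have := fderiv_clm_apply (hfd p) (differentiableAt_const z)
      simpa using this
    show fderiv ℝ (fun q => fderiv ℝ H q z) p u = _
    rw [this]; rfl
  rw [key v w, key w v]
  exact (second_derivative_symmetric (fun q => (hd q).hasFDerivAt) (hfd p).hasFDerivAt w v).symm


section Bridge
variable {U : ℝ → (Fin N → ℝ) → ℝ → ℝ}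

def unc (U : ℝ → (Fin N → ℝ) → ℝ → ℝ) : E N → ℝ := fun p => U p.1 p.2.1 p.2.2

lemma pdS_eq (hU : Differentiable ℝ (unc U)) (s : ℝ) (y : Fin N → ℝ) (τ : ℝ) :
    pdS U s y τ = D1 (unc U) eS (s, y, τ) := by
  have h := hasDerivAt_sliceS (unc U) hU s y τ
  exact h.deriv

lemma pdY_eq (hU : Differentiable ℝ (unc U)) (i : Fin N) (s : ℝ) (y : Fin N → ℝ) (τ : ℝ) :
    pdY i U s y τ = D1 (unc U) (eY i) (s, y, τ) := by
  have h := hasDerivAt_sliceY (unc U) hU i s y τ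
  exact h.deriv

lemma pdTau_eq (hU : Differentiable ℝ (unc U)) (s : ℝ) (y : Fin N → ℝ) (τ : ℝ) :
    pdTau U s y τ = D1 (unc U) eT (s, y, τ) := by
  have h := hasDerivAt_sliceT (unc U) hU s y τ
  exact h.deriv

lemma unc_pdS (hU : ContDiff ℝ (⊤ : ℕ∞) (unc U)) : unc (pdS U) = D1 (unc U) eS := by
  funext p
  exact pdS_eq (hU.differentiable (by simp)) p.1 p.2.1 p.2.2

lemma unc_pdY (hU : ContDiff ℝ (⊤ : ℕ∞) (unc U)) (i : Fin N) : unc (pdY i U) = D1 (unc U) (eY i) := by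
  funext p
  exact pdY_eq (hU.differentiable (by simp)) i p.1 p.2.1 p.2.2

lemma pdSpdS_eq (hU : ContDiff ℝ (⊤ : ℕ∞) (unc U)) (s : ℝ) (y : Fin N → ℝ) (τ : ℝ) :
    pdS (pdS U) s y τ = D2 (unc U) eS eS (s, y, τ) := by
  have h1 : Differentiable ℝ (unc (pdS U)) := by
    rw [unc_pdS hU]; exact (contDiff_D1 hU eS).differentiable (by simp)
  rw [pdS_eq h1 s y τ]
  simp only [D2, D1, unc_pdS hU]

lemma pdYpdS_eq (hU : ContDiff ℝ (⊤ : ℕ∞) (unc U)) (i : Fin N) (s : ℝ) (y : Fin N → ℝ) (τ : ℝ) :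
    pdY i (pdS U) s y τ = D2 (unc U) eS (eY i) (s, y, τ) := by
  have h1 : Differentiable ℝ (unc (pdS U)) := by
    rw [unc_pdS hU]; exact (contDiff_D1 hU eS).differentiable (by simp)
  rw [pdY_eq h1 i s y τ]
  have : D1 (unc (pdS U)) (eY i) (s,y,τ) = D2 (unc U) (eY i) eS (s,y,τ) := by
    simp only [D2, D1, unc_pdS hU]
  rw [this, D2_symm hU]

lemma pdYpdY_eq (hU : ContDiff ℝ (⊤ : ℕ∞) (unc U)) (i j : Fin N) (s : ℝ) (y : Fin N → ℝ) (τ : ℝ) :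
    pdY i (pdY j U) s y τ = D2 (unc U) (eY i) (eY j) (s, y, τ) := by
  have h1 : Differentiable ℝ (unc (pdY j U)) := by
    rw [unc_pdY hU]; exact (contDiff_D1 hU (eY j)).differentiable (by simp)
  rw [pdY_eq h1 i s y τ]
  simp only [D2, D1, unc_pdY hU]

end Bridge

section Pointwise
variable (k : Fin N → ℝ) (b : (Fin N → ℝ) → ℝ → (Fin N → ℝ)) (ε c : ℝ)
  (U : ℝ → (Fin N → ℝ) → ℝ → ℝ)

/-- boundary flux in `s` -/
def Pf : E N → ℝ := fun p =>
  (ε + 1) * D1 (unc U) eS p * unc U p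
    + 2 * (∑ i, k i * D1 (unc U) (eY i) p * unc U p)
    + ((∑ i, b p.2.1 p.2.2 i * k i) + c) * (unc U p) ^ 2 / 2

/-- flux in `y i` -/
def Qf (i : Fin N) : E N → ℝ := fun p =>
  D1 (unc U) (eY i) p * unc U p + b p.2.1 p.2.2 i * (unc U p) ^ 2 / 2

def DPf : E N → ℝ := fun p =>
  (ε + 1) * (D2 (unc U) eS eS p * unc U p + (D1 (unc U) eS p) ^ 2)
    + 2 * (∑ i, k i * (D2 (unc U) eS (eY i) p * unc U p
        + D1 (unc U) (eY i) p * D1 (unc U) eS p))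
    + ((∑ i, b p.2.1 p.2.2 i * k i) + c) * unc U p * D1 (unc U) eS p

def DQf (i : Fin N) : E N → ℝ := fun p =>
  D2 (unc U) (eY i) (eY i) p * unc U p + (D1 (unc U) (eY i) p) ^ 2
    + pdX i (fun x t => b x t i) p.2.1 p.2.2 * (unc U p) ^ 2 / 2
    + b p.2.1 p.2.2 i * unc U p * D1 (unc U) (eY i) p

def DRf : E N → ℝ := fun p => unc U p * D1 (unc U) eT p

variable {U b}

lemma hasDerivAt_P (hU : ContDiff ℝ (⊤ : ℕ∞) (unc U)) (hb : Continuous (fun q : (Fin N → ℝ) × ℝ => b q.1 q.2))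
    (s : ℝ) (y : Fin N → ℝ) (τ : ℝ) :
    HasDerivAt (fun z => Pf k b ε c U (z, y, τ)) (DPf k b ε c U (s, y, τ)) s := by
  have hdF : Differentiable ℝ (unc U) := hU.differentiable (by simp)
  have hdS : Differentiable ℝ (D1 (unc U) eS) := (contDiff_D1 hU eS).differentiable (by simp)
  have hdY : ∀ i : Fin N, Differentiable ℝ (D1 (unc U) (eY i)) :=
    fun i => (contDiff_D1 hU (eY i)).differentiable (by simp)
  have hF := hasDerivAt_sliceS (unc U) hdF s y τ
  have hUs := hasDerivAt_sliceS (D1 (unc U) eS) hdS s y τ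
  have hUy := fun i : Fin N => hasDerivAt_sliceS (D1 (unc U) (eY i)) (hdY i) s y τ
  have h1 : HasDerivAt (fun z => (ε + 1) * D1 (unc U) eS (z, y, τ) * unc U (z, y, τ))
      ((ε + 1) * (D2 (unc U) eS eS (s, y, τ) * unc U (s, y, τ)
        + (D1 (unc U) eS (s, y, τ)) ^ 2)) s := by
    have := (hUs.const_mul (ε + 1)).fun_mul hF
    refine this.congr_deriv ?_; simp only [D1, D2]; ring
  have h2 : HasDerivAt (fun z => 2 * ∑ i, k i * D1 (unc U) (eY i) (z, y, τ) * unc U (z, y, τ))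
      (2 * ∑ i, k i * (D2 (unc U) eS (eY i) (s, y, τ) * unc U (s, y, τ)
        + D1 (unc U) (eY i) (s, y, τ) * D1 (unc U) eS (s, y, τ))) s := by
    have hsum : HasDerivAt (fun z => ∑ i, k i * D1 (unc U) (eY i) (z, y, τ) * unc U (z, y, τ))
        (∑ i : Fin N, k i * (D2 (unc U) eS (eY i) (s, y, τ) * unc U (s, y, τ)
          + D1 (unc U) (eY i) (s, y, τ) * D1 (unc U) eS (s, y, τ))) s := by
      refine HasDerivAt.fun_sum (fun i _ => ?_)
      have := ((hUy i).const_mul (k i)).fun_mul hF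
      refine this.congr_deriv ?_; simp only [D1, D2]; ring
    exact hsum.const_mul 2
  have h3 : HasDerivAt (fun z =>
        ((∑ i, b y τ i * k i) + c) * (unc U (z, y, τ)) ^ 2 / 2)
      (((∑ i, b y τ i * k i) + c) * unc U (s, y, τ) * D1 (unc U) eS (s, y, τ)) s := by
    have := ((hF.fun_pow 2).const_mul ((∑ i, b y τ i * k i) + c)).div_const 2
    refine this.congr_deriv ?_
    simp only [D1, D2]; ring
  have := (h1.fun_add h2).fun_add h3
  simpa [Pf, DPf] using this

lemma hasDerivAt_Q (hU : ContDiff ℝ (⊤ : ℕ∞) (unc U))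
    (hb : ContDiff ℝ (⊤ : ℕ∞) (fun q : (Fin N → ℝ) × ℝ => b q.1 q.2)) (i : Fin N)
    (s : ℝ) (y : Fin N → ℝ) (τ : ℝ) :
    HasDerivAt (fun z => Qf b U i (s, Function.update y i z, τ))
      (DQf b U i (s, y, τ)) (y i) := by
  have hdF : Differentiable ℝ (unc U) := hU.differentiable (by simp)
  have hdY : Differentiable ℝ (D1 (unc U) (eY i)) := (contDiff_D1 hU (eY i)).differentiable (by simp)
  have hF := hasDerivAt_sliceY (unc U) hdF i s y τ
  have hUy := hasDerivAt_sliceY (D1 (unc U) (eY i)) hdY i s y τ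
  have hgb : Differentiable ℝ (fun x : Fin N → ℝ => b x τ i) := by
    have : (fun x : Fin N → ℝ => b x τ i) =
        (fun q : (Fin N → ℝ) × ℝ => b q.1 q.2 i) ∘ (fun x => (x, τ)) := rfl
    rw [this]
    have h1 : Differentiable ℝ (fun x : Fin N → ℝ => b x τ) :=
      (hb.differentiable (by simp)).comp (differentiable_id.prodMk (differentiable_const τ))
    exact (differentiable_pi.1 h1) i
  have hbs := hasDerivAt_sliceP (fun x : Fin N → ℝ => b x τ i) hgb i y
  have hbv : fderiv ℝ (fun x : Fin N → ℝ => b x τ i) y (Pi.single i 1)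
      = pdX i (fun x t => b x t i) y τ := by
    simp only [pdX]
    exact hbs.deriv.symm
  rw [hbv] at hbs
  have h1 : HasDerivAt
      (fun z => D1 (unc U) (eY i) (s, Function.update y i z, τ)
        * unc U (s, Function.update y i z, τ))
      (D2 (unc U) (eY i) (eY i) (s, y, τ) * unc U (s, y, τ)
        + (D1 (unc U) (eY i) (s, y, τ)) ^ 2) (y i) := by
    have := hUy.fun_mul hF
    refine this.congr_deriv ?_; simp only [D1, D2, Function.update_eq_self]; ring
  have h2 : HasDerivAt
      (fun z => b (Function.update y i z) τ i * (unc U (s, Function.update y i z, τ)) ^ 2 / 2)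
      (pdX i (fun x t => b x t i) y τ * (unc U (s, y, τ)) ^ 2 / 2
        + b y τ i * unc U (s, y, τ) * D1 (unc U) (eY i) (s, y, τ)) (y i) := by
    have := (hbs.fun_mul (hF.fun_pow 2)).div_const 2
    refine this.congr_deriv ?_
    simp only [D1, D2, Function.update_eq_self]; ring
  have h3 := h1.fun_add h2
  have : DQf b U i (s, y, τ) = D2 (unc U) (eY i) (eY i) (s, y, τ) * unc U (s, y, τ)
      + (D1 (unc U) (eY i) (s, y, τ)) ^ 2
      + (pdX i (fun x t => b x t i) y τ * (unc U (s, y, τ)) ^ 2 / 2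
        + b y τ i * unc U (s, y, τ) * D1 (unc U) (eY i) (s, y, τ)) := by
    simp only [DQf]; ring
  rw [this]
  exact h3

lemma hasDerivAt_R (hU : ContDiff ℝ (⊤ : ℕ∞) (unc U)) (s : ℝ) (y : Fin N → ℝ) (τ : ℝ) :
    HasDerivAt (fun z => (unc U (s, y, z)) ^ 2 / 2) (DRf U (s, y, τ)) τ := by
  have hdF : Differentiable ℝ (unc U) := hU.differentiable (by simp)
  have hF := hasDerivAt_sliceT (unc U) hdF s y τ
  have := (hF.fun_pow 2).div_const 2
  refine this.congr_deriv ?_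
  simp only [DRf, D1]; ring

lemma key_identity {k : Fin N → ℝ} {f : ℝ → ℝ} {ε c : ℝ}
    (hU : ContDiff ℝ (⊤ : ℕ∞) (unc U))
    (hk : (∑ i, (k i) ^ 2) = 1)
    (hdiv : ∀ x t, (∑ i, pdX i (fun x' t' => b x' t' i) x t) = 0)
    (pde : RegFrontEq b f k ε 1 c U) (p : E N) :
    ε * (D1 (unc U) eS p) ^ 2 + (∑ i, (k i * D1 (unc U) eS p + D1 (unc U) (eY i) p) ^ 2)
      = f (unc U p) * unc U p + DPf k b ε c U p + (∑ i, DQf b U i p) - DRf U p := by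
  obtain ⟨s, y, τ⟩ := p
  have hd : Differentiable ℝ (unc U) := hU.differentiable (by simp)
  have pde' := pde s y τ
  simp only [pdTau_eq hd, pdSpdS_eq hU, pdYpdS_eq hU, pdYpdY_eq hU, pdS_eq hd, pdY_eq hd]
    at pde'
  have hdiv' := hdiv y τ
  have huu : unc U (s, y, τ) = U s y τ := rfl
  simp only [DPf, DQf, DRf, huu]
  have h1 : (∑ i, (k i * D1 (unc U) eS (s, y, τ) + D1 (unc U) (eY i) (s, y, τ)) ^ 2)
      = (∑ i, (k i) ^ 2) * (D1 (unc U) eS (s, y, τ)) ^ 2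
        + 2 * ((D1 (unc U) eS (s, y, τ)) * (∑ i, k i * D1 (unc U) (eY i) (s, y, τ)))
        + ∑ i, (D1 (unc U) (eY i) (s, y, τ)) ^ 2 := by
    rw [Finset.sum_mul, Finset.mul_sum, Finset.mul_sum, ← Finset.sum_add_distrib,
      ← Finset.sum_add_distrib]
    exact Finset.sum_congr rfl fun i _ => by ring
  have h2 : (∑ i, k i * (D2 (unc U) eS (eY i) (s, y, τ) * U s y τ
        + D1 (unc U) (eY i) (s, y, τ) * D1 (unc U) eS (s, y, τ)))
      = U s y τ * (∑ i, k i * D2 (unc U) eS (eY i) (s, y, τ))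
        + (D1 (unc U) eS (s, y, τ)) * (∑ i, k i * D1 (unc U) (eY i) (s, y, τ)) := by
    rw [Finset.mul_sum, Finset.mul_sum, ← Finset.sum_add_distrib]
    exact Finset.sum_congr rfl fun i _ => by ring
  have h3 : (∑ i, (D2 (unc U) (eY i) (eY i) (s, y, τ) * U s y τ
        + (D1 (unc U) (eY i) (s, y, τ)) ^ 2
        + pdX i (fun x t => b x t i) y τ * (U s y τ) ^ 2 / 2
        + b y τ i * U s y τ * D1 (unc U) (eY i) (s, y, τ)))
      = U s y τ * (∑ i, D2 (unc U) (eY i) (eY i) (s, y, τ))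
        + (∑ i, (D1 (unc U) (eY i) (s, y, τ)) ^ 2)
        + ((U s y τ) ^ 2 / 2) * (∑ i, pdX i (fun x t => b x t i) y τ)
        + U s y τ * (∑ i, b y τ i * D1 (unc U) (eY i) (s, y, τ)) := by
    rw [Finset.mul_sum, Finset.mul_sum, Finset.mul_sum, ← Finset.sum_add_distrib,
      ← Finset.sum_add_distrib, ← Finset.sum_add_distrib]
    exact Finset.sum_congr rfl fun i _ => by ring
  have h4 : (∑ i, b y τ i * (k i * D1 (unc U) eS (s, y, τ) + D1 (unc U) (eY i) (s, y, τ)))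
      = (D1 (unc U) eS (s, y, τ)) * (∑ i, b y τ i * k i)
        + (∑ i, b y τ i * D1 (unc U) (eY i) (s, y, τ)) := by
    rw [Finset.mul_sum, ← Finset.sum_add_distrib]
    exact Finset.sum_congr rfl fun i _ => by ring
  rw [h1, h2, h3, pde', h4, hdiv', hk]
  ring

end Pointwise

section Integration
variable {k : Fin N → ℝ} {b : (Fin N → ℝ) → ℝ → (Fin N → ℝ)} {ε c : ℝ}
  {U : ℝ → (Fin N → ℝ) → ℝ → ℝ}

def Wc (N : ℕ) : Set ((Fin N → ℝ) × ℝ) := Icc 0 1 ×ˢ Ioo (0 : ℝ) 1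

def cellR (N : ℕ) (n : ℕ) : Set (E N) := Icc (-(n : ℝ)) n ×ˢ Wc N

lemma cont_bE (hb : Continuous (fun q : (Fin N → ℝ) × ℝ => b q.1 q.2)) (i : Fin N) :
    Continuous (fun p : E N => b p.2.1 p.2.2 i) := by
  have h1 : Continuous (fun p : E N => b p.2.1 p.2.2) := hb.comp continuous_snd
  exact (continuous_apply i).comp h1

lemma cont_D1 (hU : ContDiff ℝ (⊤ : ℕ∞) (unc U)) (v : E N) : Continuous (D1 (unc U) v) :=
  (contDiff_D1 hU v).continuous

lemma cont_D2 (hU : ContDiff ℝ (⊤ : ℕ∞) (unc U)) (v w : E N) : Continuous (D2 (unc U) v w) :=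
  (contDiff_D2 hU v w).continuous

lemma cont_Pf (hU : ContDiff ℝ (⊤ : ℕ∞) (unc U))
    (hb : Continuous (fun q : (Fin N → ℝ) × ℝ => b q.1 q.2)) :
    Continuous (Pf k b ε c U) := by
  unfold Pf
  refine Continuous.add (Continuous.add ?_ ?_) ?_
  · exact (continuous_const.mul (cont_D1 hU eS)).mul hU.continuous
  · exact continuous_const.mul (continuous_finset_sum _ fun i _ =>
      (continuous_const.mul (cont_D1 hU (eY i))).mul hU.continuous)
  · exact Continuous.div_const (((continuous_finset_sum _ fun i _ =>
      (cont_bE hb i).mul continuous_const).add continuous_const).mul (hU.continuous.pow 2)) 2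

lemma cont_DPf (hU : ContDiff ℝ (⊤ : ℕ∞) (unc U))
    (hb : Continuous (fun q : (Fin N → ℝ) × ℝ => b q.1 q.2)) :
    Continuous (DPf k b ε c U) := by
  unfold DPf
  refine Continuous.add (Continuous.add ?_ ?_) ?_
  · exact continuous_const.mul (((cont_D2 hU eS eS).mul hU.continuous).add
      ((cont_D1 hU eS).pow 2))
  · exact continuous_const.mul (continuous_finset_sum _ fun i _ =>
      continuous_const.mul (((cont_D2 hU eS (eY i)).mul hU.continuous).add
        ((cont_D1 hU (eY i)).mul (cont_D1 hU eS))))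
  · exact (((continuous_finset_sum _ fun i _ =>
      (cont_bE hb i).mul continuous_const).add continuous_const).mul hU.continuous).mul
      (cont_D1 hU eS)

lemma cont_pdXb (hb : ContDiff ℝ (⊤ : ℕ∞) (fun q : (Fin N → ℝ) × ℝ => b q.1 q.2)) (i : Fin N) :
    Continuous (fun p : E N => pdX i (fun x t => b x t i) p.2.1 p.2.2) := by
  have hbi : ContDiff ℝ (⊤ : ℕ∞) (fun q : (Fin N → ℝ) × ℝ => b q.1 q.2 i) := by
    have : (fun q : (Fin N → ℝ) × ℝ => b q.1 q.2 i)
        = (fun v : Fin N → ℝ => v i) ∘ (fun q : (Fin N → ℝ) × ℝ => b q.1 q.2) := rfl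
    rw [this]
    exact (ContDiff.comp (contDiff_pi.1 contDiff_id i) hb)
  -- pdX i b_i x t = fderiv of the slice; identify with fderiv of uncurried applied to (single i 1, 0)
  have key : ∀ (x : Fin N → ℝ) (t : ℝ), pdX i (fun x' t' => b x' t' i) x t
      = fderiv ℝ (fun q : (Fin N → ℝ) × ℝ => b q.1 q.2 i) (x, t) (Pi.single i 1, 0) := by
    intro x t
    have hγ : HasDerivAt (fun z : ℝ => ((Function.update x i z, t) : (Fin N → ℝ) × ℝ))
        ((Pi.single i 1, 0)) (x i) :=
      (hasDerivAt_update x i (x i)).prodMk (hasDerivAt_const _ t)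
    have hc := ((hbi.differentiable (by simp)) (Function.update x i (x i), t)).hasFDerivAt
    have h2 := hc.comp_hasDerivAt (x i) hγ
    rw [Function.update_eq_self] at h2
    exact h2.deriv
  have : Continuous (fun q : (Fin N → ℝ) × ℝ =>
      fderiv ℝ (fun q : (Fin N → ℝ) × ℝ => b q.1 q.2 i) q (Pi.single i 1, 0)) :=
    (((hbi.fderiv_right (m := (⊤ : ℕ∞)) (by simp)).continuous).clm_apply continuous_const)
  have h3 : Continuous (fun p : E N => (p.2.1, p.2.2)) := continuous_snd
  have := this.comp h3
  simpa [key, Function.comp_def] using this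

lemma cont_DQf (hU : ContDiff ℝ (⊤ : ℕ∞) (unc U))
    (hb : ContDiff ℝ (⊤ : ℕ∞) (fun q : (Fin N → ℝ) × ℝ => b q.1 q.2)) (i : Fin N) :
    Continuous (DQf b U i) := by
  unfold DQf
  refine Continuous.add (Continuous.add (Continuous.add ?_ ?_) ?_) ?_
  · exact (cont_D2 hU (eY i) (eY i)).mul hU.continuous
  · exact (cont_D1 hU (eY i)).pow 2
  · exact ((cont_pdXb hb i).mul (hU.continuous.pow 2)).div_const 2
  · exact ((cont_bE hb.continuous i).mul hU.continuous).mul (cont_D1 hU (eY i))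

lemma cont_DRf (hU : ContDiff ℝ (⊤ : ℕ∞) (unc U)) : Continuous (DRf U) :=
  hU.continuous.mul (cont_D1 hU eT)

lemma measurableSet_Wc : MeasurableSet (Wc N) :=
  measurableSet_Icc.prod measurableSet_Ioo

lemma measurableSet_cellR (n : ℕ) : MeasurableSet (cellR N n) :=
  measurableSet_Icc.prod measurableSet_Wc

lemma integrableOn_Wc {g : (Fin N → ℝ) × ℝ → ℝ} (hg : Continuous g) :
    IntegrableOn g (Wc N) := by
  have hK : IsCompact ((Icc (0 : Fin N → ℝ) 1) ×ˢ (Icc (0:ℝ) 1)) :=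
    isCompact_Icc.prod isCompact_Icc
  exact (hg.continuousOn.integrableOn_compact hK).mono_set
    (prod_mono_right Ioo_subset_Icc_self)

lemma integrableOn_cellR {g : E N → ℝ} (hg : Continuous g) (n : ℕ) :
    IntegrableOn g (cellR N n) := by
  have hK : IsCompact ((Icc (-(n:ℝ)) n) ×ˢ ((Icc (0 : Fin N → ℝ) 1) ×ˢ (Icc (0:ℝ) 1))) :=
    isCompact_Icc.prod (isCompact_Icc.prod isCompact_Icc)
  exact (hg.continuousOn.integrableOn_compact hK).mono_set
    (prod_mono_right (prod_mono_right Ioo_subset_Icc_self))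

end Integration

section FTC

lemma setIntegral_prod_vol {α β : Type*} [MeasureSpace α] [MeasureSpace β]
    [SFinite (volume : Measure α)] [SFinite (volume : Measure β)]
    (f : α × β → ℝ) {s : Set α} {t : Set β} (h : IntegrableOn f (s ×ˢ t)) :
    ∫ z in s ×ˢ t, f z = ∫ x in s, ∫ y in t, f (x, y) := by
  rw [Measure.volume_eq_prod α β] at h ⊢
  exact setIntegral_prod f h

lemma setIntegral_prod_symm_vol {α β : Type*} [MeasureSpace α] [MeasureSpace β]
    [SFinite (volume : Measure α)] [SFinite (volume : Measure β)]
    (f : α × β → ℝ) {s : Set α} {t : Set β} (h : IntegrableOn f (s ×ˢ t)) :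
    ∫ z in s ×ˢ t, f z = ∫ y in t, ∫ x in s, f (x, y) := by
  rw [Measure.volume_eq_prod α β, ← Measure.prod_restrict]
  refine integral_prod_symm f ?_
  rw [Measure.prod_restrict, ← Measure.volume_eq_prod α β]
  exact h

variable {k : Fin N → ℝ} {b : (Fin N → ℝ) → ℝ → (Fin N → ℝ)} {ε c : ℝ}
  {U : ℝ → (Fin N → ℝ) → ℝ → ℝ}

lemma integral_DPf (hU : ContDiff ℝ (⊤ : ℕ∞) (unc U))
    (hb : Continuous (fun q : (Fin N → ℝ) × ℝ => b q.1 q.2)) (n : ℕ) :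
    ∫ p in cellR N n, DPf k b ε c U p
      = ∫ q in Wc N, (Pf k b ε c U ((n : ℝ), q) - Pf k b ε c U (-(n : ℝ), q)) := by
  have hint : IntegrableOn (DPf k b ε c U) (cellR N n) :=
    integrableOn_cellR (cont_DPf hU hb) n
  rw [show cellR N n = Icc (-(n:ℝ)) n ×ˢ Wc N from rfl] at hint ⊢
  rw [setIntegral_prod_symm_vol _ hint]
  refine setIntegral_congr_fun measurableSet_Wc (fun q _ => ?_)
  have hle : (-(n:ℝ)) ≤ n :=
    le_trans (neg_nonpos.mpr (Nat.cast_nonneg n)) (Nat.cast_nonneg n)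
  rw [integral_Icc_eq_integral_Ioc, ← intervalIntegral.integral_of_le hle]
  have hcont : Continuous (fun t : ℝ => DPf k b ε c U (t, q)) :=
    (cont_DPf hU hb).comp (continuous_id.prodMk continuous_const)
  exact intervalIntegral.integral_eq_sub_of_hasDerivAt
    (fun t _ => hasDerivAt_P k ε c hU hb t q.1 q.2)
    (hcont.intervalIntegrable _ _)

lemma integral_DRf (hU : ContDiff ℝ (⊤ : ℕ∞) (unc U))
    (hper : ∀ s y τ, U s y (τ + 1) = U s y τ) (n : ℕ) :
    ∫ p in cellR N n, DRf U p = 0 := by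
  have hint : IntegrableOn (DRf U) (cellR N n) := integrableOn_cellR (cont_DRf hU) n
  rw [show cellR N n = Icc (-(n:ℝ)) n ×ˢ Wc N from rfl] at hint ⊢
  rw [setIntegral_prod_vol _ hint]
  have houter : ∀ s : ℝ, ∫ q in Wc N, DRf U (s, q) = 0 := by
    intro s
    have hintW : IntegrableOn (fun q : (Fin N → ℝ) × ℝ => DRf U (s, q)) (Wc N) :=
      integrableOn_Wc ((cont_DRf hU).comp (continuous_const.prodMk continuous_id))
    rw [show Wc N = Icc (0 : Fin N → ℝ) 1 ×ˢ Ioo (0:ℝ) 1 from rfl] at hintW ⊢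
    rw [setIntegral_prod_vol _ hintW]
    have hinner : ∀ y : Fin N → ℝ, ∫ t in Ioo (0:ℝ) 1, DRf U (s, y, t) = 0 := by
      intro y
      rw [← integral_Ioc_eq_integral_Ioo,
        ← intervalIntegral.integral_of_le (by norm_num : (0:ℝ) ≤ 1)]
      have hcont : Continuous (fun t : ℝ => DRf U (s, y, t)) :=
        (cont_DRf hU).comp (continuous_const.prodMk (continuous_const.prodMk continuous_id))
      have hftc := intervalIntegral.integral_eq_sub_of_hasDerivAt
        (f := fun z => (unc U (s, y, z)) ^ 2 / 2) (f' := fun z => DRf U (s, y, z))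
        (a := 0) (b := 1)
        (fun t _ => hasDerivAt_R hU s y t)
        (hcont.intervalIntegrable _ _)
      rw [hftc]
      have h01 : unc U (s, y, 1) = unc U (s, y, 0) := by
        have := hper s y 0
        simpa [unc] using this
      rw [h01]; ring
    simp only [hinner, integral_zero]
  simp only [houter, integral_zero]

end FTC

section Divergence
variable {k : Fin N → ℝ} {b : (Fin N → ℝ) → ℝ → (Fin N → ℝ)} {ε c : ℝ}
  {U : ℝ → (Fin N → ℝ) → ℝ → ℝ}

lemma fderiv_translation {H : E N → ℝ} (hH : Differentiable ℝ H) (v : E N)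
    (hper : ∀ p, H (p + v) = H p)
    (p w : E N) : fderiv ℝ H (p + v) w = fderiv ℝ H p w := by
  have htr : HasFDerivAt (fun q : E N => q + v) (ContinuousLinearMap.id ℝ (E N)) p :=
    (hasFDerivAt_id p).add_const v
  have hcomp := (hH (p + v)).hasFDerivAt.comp p htr
  have heq : (H ∘ fun q : E N => q + v) = H := funext fun q => hper q
  rw [heq] at hcomp
  have := (hH p).hasFDerivAt.unique hcomp
  rw [this]
  simp

lemma contDiff_bE (hb : ContDiff ℝ (⊤ : ℕ∞) (fun q : (Fin N → ℝ) × ℝ => b q.1 q.2)) (i : Fin N) :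
    ContDiff ℝ (⊤ : ℕ∞) (fun p : E N => b p.2.1 p.2.2 i) := by
  have h0 : ContDiff ℝ (⊤ : ℕ∞) (fun q : (Fin N → ℝ) × ℝ => b q.1 q.2 i) :=
    (contDiff_pi.1 contDiff_id i).comp hb
  exact h0.comp contDiff_snd

lemma contDiff_Qf (hU : ContDiff ℝ (⊤ : ℕ∞) (unc U))
    (hb : ContDiff ℝ (⊤ : ℕ∞) (fun q : (Fin N → ℝ) × ℝ => b q.1 q.2)) (i : Fin N) :
    ContDiff ℝ (⊤ : ℕ∞) (Qf b U i) := by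
  unfold Qf
  exact ((contDiff_D1 hU (eY i)).mul hU).add
    (((contDiff_bE hb i).mul (hU.pow 2)).div_const 2)

lemma trans_point (s : ℝ) (y : Fin N → ℝ) (τ : ℝ) (j : Fin N) :
    ((s, y + Pi.single j 1, τ) : E N) = (s, y, τ) + (0, Pi.single j 1, 0) := by
  simp [Prod.mk_add_mk]

lemma Qf_periodic (hU : ContDiff ℝ (⊤ : ℕ∞) (unc U))
    (hperY : ∀ s y τ i, U s (y + Pi.single i 1) τ = U s y τ)
    (hbper : ∀ x t i, b (x + Pi.single i 1) t = b x t)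
    (i j : Fin N) (s : ℝ) (y : Fin N → ℝ) (τ : ℝ) :
    Qf b U i (s, y + Pi.single j 1, τ) = Qf b U i (s, y, τ) := by
  have huncper : ∀ p : E N, unc U (p + (0, Pi.single j 1, 0)) = unc U p := by
    intro p
    show U (p.1 + 0) (p.2.1 + Pi.single j 1) (p.2.2 + 0) = U p.1 p.2.1 p.2.2
    rw [add_zero, add_zero, hperY]
  have hD1 : D1 (unc U) (eY i) (s, y + Pi.single j 1, τ) = D1 (unc U) (eY i) (s, y, τ) := by
    rw [trans_point]
    exact fderiv_translation (hU.differentiable (by simp)) _ huncper _ _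
  have hUper : unc U (s, y + Pi.single j 1, τ) = unc U (s, y, τ) := by
    rw [trans_point]; exact huncper _
  have hb' : b (y + Pi.single j 1) τ i = b y τ i := congrFun (hbper y τ j) i
  unfold Qf
  simp only []
  rw [hD1, hUper, hb']

lemma insertNth_one {m : ℕ} (i : Fin (m + 1)) (x : Fin m → ℝ) :
    i.insertNth (1 : ℝ) x = i.insertNth (0 : ℝ) x + (Pi.single i 1 : Fin (m+1) → ℝ) := by
  funext j
  rcases eq_or_ne j i with rfl | hj
  · simp
  · obtain ⟨l, rfl⟩ := Fin.exists_succAbove_eq hj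
    simp [Fin.insertNth_apply_succAbove, Pi.single_eq_of_ne (Fin.succAbove_ne i l)]

lemma divergence_step {m : ℕ} {b : (Fin (m+1) → ℝ) → ℝ → (Fin (m+1) → ℝ)}
    {U : ℝ → (Fin (m+1) → ℝ) → ℝ → ℝ}
    (hU : ContDiff ℝ (⊤ : ℕ∞) (unc U))
    (hb : ContDiff ℝ (⊤ : ℕ∞) (fun q : (Fin (m+1) → ℝ) × ℝ => b q.1 q.2))
    (hperY : ∀ s y τ i, U s (y + Pi.single i 1) τ = U s y τ)
    (hbper : ∀ x t i, b (x + Pi.single i 1) t = b x t)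
    (i : Fin (m+1)) (s t : ℝ) :
    ∫ y in Icc (0 : Fin (m+1) → ℝ) 1, DQf b U i (s, y, t) = 0 := by
  set g : (Fin (m+1) → ℝ) → ℝ := fun y => Qf b U i (s, y, t) with hg
  have hgsmooth : ContDiff ℝ (⊤ : ℕ∞) g :=
    (contDiff_Qf hU hb i).comp
      (contDiff_const.prodMk (contDiff_id.prodMk contDiff_const))
  have hgdiff : Differentiable ℝ g := hgsmooth.differentiable (by simp)
  set f : Fin (m+1) → (Fin (m+1) → ℝ) → ℝ := fun j y => if j = i then g y else 0 with hf
  set f' : Fin (m+1) → (Fin (m+1) → ℝ) → (Fin (m+1) → ℝ) →L[ℝ] ℝ :=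
    fun j y => if j = i then fderiv ℝ g y else 0 with hf'
  have hsum : ∀ y : Fin (m+1) → ℝ,
      (∑ j, f' j y (Pi.single j 1)) = fderiv ℝ g y (Pi.single i 1) := by
    intro y
    rw [Finset.sum_eq_single i]
    · simp [hf']
    · intro j _ hj
      simp [hf', hj]
    · intro h; exact absurd (Finset.mem_univ i) h
  have hmain : ∀ y : Fin (m+1) → ℝ, fderiv ℝ g y (Pi.single i 1) = DQf b U i (s, y, t) := by
    intro y
    have h1 := hasDerivAt_sliceP g hgdiff i y
    have h2 := hasDerivAt_Q hU hb i s y t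
    exact h1.unique h2
  have hcont_dg : Continuous (fun y => fderiv ℝ g y (Pi.single i 1)) :=
    ((hgsmooth.fderiv_right (m := (⊤ : ℕ∞)) (by simp)).continuous).clm_apply
      continuous_const
  have hdiv := integral_divergence_of_hasFDerivAt_off_countable'
    (a := (0 : Fin (m+1) → ℝ)) (b := (1 : Fin (m+1) → ℝ)) (fun _ => zero_le_one) f f' ∅ countable_empty
    (fun j => by
      rcases eq_or_ne j i with rfl | hj
      · simpa [hf] using hgsmooth.continuous.continuousOn
      · simp only [hf, if_neg hj]; exact continuousOn_const)
    (fun x _ j => by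
      rcases eq_or_ne j i with rfl | hj
      · simpa [hf, hf'] using (hgdiff x).hasFDerivAt
      · simp only [hf, hf', if_neg hj]; exact hasFDerivAt_const 0 x)
    (by
      apply IntegrableOn.congr_fun (f := fun y => fderiv ℝ g y (Pi.single i 1))
      · exact hcont_dg.continuousOn.integrableOn_compact isCompact_Icc
      · intro y _; exact (hsum y).symm
      · exact measurableSet_Icc)
  have hzero : (∑ j : Fin (m+1),
      ((∫ x in Icc ((0 : Fin (m+1) → ℝ) ∘ j.succAbove) ((1 : Fin (m+1) → ℝ) ∘ j.succAbove),
        f j (j.insertNth ((1 : Fin (m+1) → ℝ) j) x)) -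
       ∫ x in Icc ((0 : Fin (m+1) → ℝ) ∘ j.succAbove) ((1 : Fin (m+1) → ℝ) ∘ j.succAbove),
        f j (j.insertNth ((0 : Fin (m+1) → ℝ) j) x))) = 0 := by
    refine Finset.sum_eq_zero (fun j _ => ?_)
    rcases eq_or_ne j i with rfl | hj
    · have hper : ∀ x : Fin m → ℝ,
          f j (j.insertNth ((1 : Fin (m+1) → ℝ) j) x) =
          f j (j.insertNth ((0 : Fin (m+1) → ℝ) j) x) := by
        intro x
        simp only [hf, if_pos rfl, Pi.one_apply, Pi.zero_apply, hg]
        rw [insertNth_one]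
        exact Qf_periodic hU hperY hbper j j s (j.insertNth (0:ℝ) x) t
      rw [setIntegral_congr_fun measurableSet_Icc (fun x _ => hper x)]
      exact sub_self _
    · simp only [hf, if_neg hj]
      simp
  calc ∫ y in Icc (0 : Fin (m+1) → ℝ) 1, DQf b U i (s, y, t)
      = ∫ y in Icc (0 : Fin (m+1) → ℝ) 1, ∑ j, f' j y (Pi.single j 1) := by
        refine setIntegral_congr_fun measurableSet_Icc (fun y _ => ?_)
        rw [hsum y, hmain y]
    _ = 0 := by rw [hdiv, hzero]

lemma integral_DQf {m : ℕ} {b : (Fin (m+1) → ℝ) → ℝ → (Fin (m+1) → ℝ)}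
    {U : ℝ → (Fin (m+1) → ℝ) → ℝ → ℝ}
    (hU : ContDiff ℝ (⊤ : ℕ∞) (unc U))
    (hb : ContDiff ℝ (⊤ : ℕ∞) (fun q : (Fin (m+1) → ℝ) × ℝ => b q.1 q.2))
    (hperY : ∀ s y τ i, U s (y + Pi.single i 1) τ = U s y τ)
    (hbper : ∀ x t i, b (x + Pi.single i 1) t = b x t)
    (i : Fin (m+1)) (n : ℕ) :
    ∫ p in cellR (m+1) n, DQf b U i p = 0 := by
  have hint : IntegrableOn (DQf b U i) (cellR (m+1) n) :=
    integrableOn_cellR (cont_DQf hU hb i) n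
  rw [show cellR (m+1) n = Icc (-(n:ℝ)) n ×ˢ Wc (m+1) from rfl] at hint ⊢
  rw [setIntegral_prod_vol _ hint]
  have houter : ∀ s : ℝ, ∫ q in Wc (m+1), DQf b U i (s, q) = 0 := by
    intro s
    have hintW : IntegrableOn (fun q : (Fin (m+1) → ℝ) × ℝ => DQf b U i (s, q)) (Wc (m+1)) :=
      integrableOn_Wc ((cont_DQf hU hb i).comp (continuous_const.prodMk continuous_id))
    rw [show Wc (m+1) = Icc (0 : Fin (m+1) → ℝ) 1 ×ˢ Ioo (0:ℝ) 1 from rfl] at hintW ⊢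
    rw [setIntegral_prod_symm_vol _ hintW]
    have hinner : ∀ t : ℝ, ∫ y in Icc (0 : Fin (m+1) → ℝ) 1, DQf b U i (s, y, t) = 0 :=
      fun t => divergence_step hU hb hperY hbper i s t
    simp only [hinner, integral_zero]
  simp only [houter, integral_zero]

end Divergence

section Boundary
variable {k : Fin N → ℝ} {b : (Fin N → ℝ) → ℝ → (Fin N → ℝ)} {ε c : ℝ}
  {U : ℝ → (Fin N → ℝ) → ℝ → ℝ}

lemma volume_Wc : volume (Wc N) = 1 := by
  rw [show Wc N = Icc (0 : Fin N → ℝ) 1 ×ˢ Ioo (0:ℝ) 1 from rfl,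
    Measure.volume_eq_prod, Measure.prod_prod, Real.volume_Icc_pi, Real.volume_Ioo]
  simp

lemma cont_beta (hbc : Continuous (fun q : (Fin N → ℝ) × ℝ => b q.1 q.2)) (k : Fin N → ℝ) :
    Continuous (fun q : (Fin N → ℝ) × ℝ => ∑ i, b q.1 q.2 i * k i) :=
  continuous_finset_sum _ fun i _ =>
    (((continuous_apply i).comp hbc).mul continuous_const)

lemma beta_mean (hbc : Continuous (fun q : (Fin N → ℝ) × ℝ => b q.1 q.2))
    (hmean : ∀ i, (∫ x in Icc (0 : Fin N → ℝ) 1, ∫ t in Ioo (0 : ℝ) 1, b x t i) = 0)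
    (k : Fin N → ℝ) :
    ∫ q in Wc N, (∑ i, b q.1 q.2 i * k i) = 0 := by
  have hint : ∀ i : Fin N, IntegrableOn (fun q : (Fin N → ℝ) × ℝ => b q.1 q.2 i * k i) (Wc N) :=
    fun i => integrableOn_Wc (((continuous_apply i).comp hbc).mul continuous_const)
  rw [integral_finset_sum _ (fun i _ => hint i)]
  refine Finset.sum_eq_zero fun i _ => ?_
  rw [integral_mul_const]
  have h2 : ∫ q in Wc N, b q.1 q.2 i = 0 := by
    have hint2 : IntegrableOn (fun q : (Fin N → ℝ) × ℝ => b q.1 q.2 i) (Wc N) :=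
      integrableOn_Wc ((continuous_apply i).comp hbc)
    rw [show Wc N = Icc (0 : Fin N → ℝ) 1 ×ˢ Ioo (0:ℝ) 1 from rfl] at hint2 ⊢
    rw [setIntegral_prod_vol _ hint2]
    exact hmean i
  rw [h2, zero_mul]

lemma half_mean (hbc : Continuous (fun q : (Fin N → ℝ) × ℝ => b q.1 q.2))
    (hbmean : ∫ q in Wc N, (∑ i, b q.1 q.2 i * k i) = 0) :
    ∫ q in Wc N, ((∑ i, b q.1 q.2 i * k i) + c) / 2 = c / 2 := by
  have h1 : ∀ q : (Fin N → ℝ) × ℝ, ((∑ i, b q.1 q.2 i * k i) + c) / 2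
      = (1/2) * ((∑ i, b q.1 q.2 i * k i) + c) := fun q => by ring
  simp only [h1]
  rw [integral_const_mul, integral_add (integrableOn_Wc (cont_beta hbc k))
    (integrableOn_Wc continuous_const), hbmean, setIntegral_const, measureReal_def, volume_Wc]
  norm_num
  ring


lemma abs_setIntegral_le {α : Type*} [MeasurableSpace α] {μ : Measure α} {s : Set α}
    {f : α → ℝ} {C : ℝ} (hμ : μ s = 1) (hf : IntegrableOn f s μ)
    (h : ∀ x ∈ s, |f x| ≤ C) : |∫ x in s, f x ∂μ| ≤ C := by
  have hh := norm_setIntegral_le_of_norm_le_const (μ := μ) (s := s) (C := C)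
    (f := f) (by rw [hμ]; exact ENNReal.one_lt_top) (by simpa only [Real.norm_eq_abs] using h)
  rw [measureReal_def, hμ] at hh
  simpa using hh

set_option maxHeartbeats 2000000 in
lemma boundary_tendsto
    (hU : ContDiff ℝ (⊤ : ℕ∞) (unc U))
    (hbc : Continuous (fun q : (Fin N → ℝ) × ℝ => b q.1 q.2))
    (hε : 0 ≤ ε)
    (hrange : ∀ s y τ, U s y τ ∈ Ioo (0 : ℝ) 1)
    (hvanish : DerivsVanish U)
    (hlim0 : ∀ η > (0 : ℝ), ∃ M : ℝ, ∀ s y τ, M ≤ s → |U s y τ| < η)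
    (hlim1 : ∀ η > (0 : ℝ), ∃ M : ℝ, ∀ s y τ, s ≤ M → |U s y τ - 1| < η)
    (hbmean : ∫ q in Wc N, (∑ i, b q.1 q.2 i * k i) = 0) :
    Tendsto (fun n : ℕ => ∫ q in Wc N,
        (Pf k b ε c U ((n : ℝ), q) - Pf k b ε c U (-(n : ℝ), q)))
      atTop (𝓝 (-(c/2))) := by
  have hd : Differentiable ℝ (unc U) := hU.differentiable (by simp)
  -- bound on beta over the compact closure
  obtain ⟨B₀, hB₀⟩ := (isCompact_Icc.prod isCompact_Icc).exists_bound_of_continuousOn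
    (s := (Icc (0 : Fin N → ℝ) 1) ×ˢ (Icc (0:ℝ) 1)) (cont_beta hbc k).continuousOn
  obtain ⟨B, hB⟩ : ∃ B : ℝ, B = max B₀ 0 := ⟨_, rfl⟩
  have hBnn : 0 ≤ B := hB ▸ le_max_right _ _
  have hβ : ∀ q ∈ Wc N, |∑ i, b q.1 q.2 i * k i| ≤ B := by
    intro q hq
    rw [hB]
    refine le_trans ?_ (le_max_left B₀ 0)
    exact hB₀ q ⟨hq.1, Ioo_subset_Icc_self hq.2⟩
  obtain ⟨K, hK⟩ : ∃ K : ℝ, K = ∑ i, |k i| := ⟨_, rfl⟩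
  have hKnn : 0 ≤ K := hK ▸ Finset.sum_nonneg fun i _ => abs_nonneg _
  obtain ⟨A, hA⟩ : ∃ A : ℝ, A = (ε + 1) + 2 * K + (B + |c|) + 1 := ⟨_, rfl⟩
  have hApos : 0 < A := by rw [hA]; positivity
  -- uniform bound |U| ≤ 1
  have hU1 : ∀ s y τ, |U s y τ| ≤ 1 := fun s y τ =>
    abs_le.2 ⟨by linarith [(hrange s y τ).1], le_of_lt (hrange s y τ).2⟩
  rw [Metric.tendsto_atTop]
  intro δ hδ
  obtain ⟨η, hη⟩ : ∃ η : ℝ, η = min 1 (δ / (4 * A)) := ⟨_, rfl⟩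
  have hηpos : 0 < η := hη ▸ lt_min one_pos (by positivity)
  have hη1 : η ≤ 1 := hη ▸ min_le_left _ _
  have hηδ : η ≤ δ / (4 * A) := hη ▸ min_le_right _ _
  obtain ⟨M₁, hM₁pos, hM₁⟩ := hvanish η hηpos
  obtain ⟨M₂, hM₂⟩ := hlim0 η hηpos
  obtain ⟨M₃, hM₃⟩ := hlim1 η hηpos
  obtain ⟨n₀, hn₀⟩ := exists_nat_ge (max M₁ (max M₂ (-M₃)))
  refine ⟨n₀, fun n hn => ?_⟩
  have hnn : (n₀ : ℝ) ≤ n := Nat.cast_le.2 hn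
  have hnM₁ : M₁ ≤ (n : ℝ) := le_trans (le_trans (le_max_left _ _) hn₀) hnn
  have hnM₂ : M₂ ≤ (n : ℝ) :=
    le_trans (le_trans (le_trans (le_max_left _ _) (le_max_right _ _)) hn₀) hnn
  have hnM₃ : -(n : ℝ) ≤ M₃ := by
    have : -M₃ ≤ (n : ℝ) :=
      le_trans (le_trans (le_trans (le_max_right _ _) (le_max_right _ _)) hn₀) hnn
    linarith
  -- pointwise bounds
  have hbound : ∀ q ∈ Wc N,
      |Pf k b ε c U ((n : ℝ), q) - Pf k b ε c U (-(n : ℝ), q)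
        + ((∑ i, b q.1 q.2 i * k i) + c) / 2| ≤ 2 * A * η := by
    intro q hq
    obtain ⟨y, τ⟩ := q
    have hβq : |∑ i, b y τ i * k i| ≤ B := hβ (y, τ) hq
    -- bounds at s = n
    have hvn := hM₁ (n : ℝ) y τ (by rwa [abs_of_nonneg (Nat.cast_nonneg n)])
    have hvm := hM₁ (-(n : ℝ)) y τ (by rw [abs_neg, abs_of_nonneg (Nat.cast_nonneg n)]; exact hnM₁)
    have husn : |D1 (unc U) eS ((n : ℝ), y, τ)| ≤ η := by
      rw [← pdS_eq hd]; exact le_of_lt hvn.1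
    have husm : |D1 (unc U) eS (-(n : ℝ), y, τ)| ≤ η := by
      rw [← pdS_eq hd]; exact le_of_lt hvm.1
    have huyn : ∀ i, |D1 (unc U) (eY i) ((n : ℝ), y, τ)| ≤ η := fun i => by
      rw [← pdY_eq hd]; exact le_of_lt (hvn.2.2.1 i)
    have huym : ∀ i, |D1 (unc U) (eY i) (-(n : ℝ), y, τ)| ≤ η := fun i => by
      rw [← pdY_eq hd]; exact le_of_lt (hvm.2.2.1 i)
    have huun : |U (n : ℝ) y τ| ≤ η := le_of_lt (hM₂ (n : ℝ) y τ hnM₂)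
    have huum : |U (-(n : ℝ)) y τ - 1| ≤ η := le_of_lt (hM₃ (-(n : ℝ)) y τ hnM₃)
    have huun1 : |U (n : ℝ) y τ| ≤ 1 := hU1 _ _ _
    have huum1 : |U (-(n : ℝ)) y τ| ≤ 1 := hU1 _ _ _
    -- bound sum terms
    have hsumn : |∑ i, k i * D1 (unc U) (eY i) ((n : ℝ), y, τ) * U (n : ℝ) y τ| ≤ K * η := by
      refine le_trans (Finset.abs_sum_le_sum_abs _ _) ?_
      rw [hK, Finset.sum_mul]
      refine Finset.sum_le_sum fun i _ => ?_
      rw [abs_mul, abs_mul]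
      have h1 := huyn i
      have h2 := abs_nonneg (k i)
      have h3 : |k i| * |D1 (unc U) (eY i) ((n : ℝ), y, τ)| * |U (n : ℝ) y τ|
          ≤ |k i| * η * 1 :=
        mul_le_mul (mul_le_mul_of_nonneg_left h1 h2) huun1 (abs_nonneg _) (by positivity)
      rw [mul_one] at h3
      exact h3
    have hsumm : |∑ i, k i * D1 (unc U) (eY i) (-(n : ℝ), y, τ) * U (-(n : ℝ)) y τ| ≤ K * η := by
      refine le_trans (Finset.abs_sum_le_sum_abs _ _) ?_
      rw [hK, Finset.sum_mul]
      refine Finset.sum_le_sum fun i _ => ?_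
      rw [abs_mul, abs_mul]
      have h1 := huym i
      have h2 := abs_nonneg (k i)
      have h3 : |k i| * |D1 (unc U) (eY i) (-(n : ℝ), y, τ)| * |U (-(n : ℝ)) y τ|
          ≤ |k i| * η * 1 :=
        mul_le_mul (mul_le_mul_of_nonneg_left h1 h2) huum1 (abs_nonneg _) (by positivity)
      rw [mul_one] at h3
      exact h3
    -- |Pf(n,q)| ≤ A η
    have hPn : |Pf k b ε c U ((n : ℝ), y, τ)| ≤ A * η := by
      have huu : unc U ((n : ℝ), y, τ) = U (n : ℝ) y τ := rfl
      unfold Pf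
      simp only [huu]
      refine le_trans (abs_add_three _ _ _) ?_
      have e1 : |(ε + 1) * D1 (unc U) eS ((n : ℝ), y, τ) * U (n : ℝ) y τ| ≤ (ε + 1) * η := by
        rw [abs_mul, abs_mul, abs_of_nonneg (by linarith : (0:ℝ) ≤ ε + 1)]
        have h3 : (ε + 1) * |D1 (unc U) eS ((n : ℝ), y, τ)| * |U (n : ℝ) y τ|
            ≤ (ε + 1) * η * 1 :=
          mul_le_mul (mul_le_mul_of_nonneg_left husn (by linarith)) huun1
            (abs_nonneg _) (by positivity)
        rw [mul_one] at h3
        exact h3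
      have e2 : |2 * ∑ i, k i * D1 (unc U) (eY i) ((n : ℝ), y, τ) * U (n : ℝ) y τ|
          ≤ 2 * (K * η) := by
        rw [abs_mul, abs_of_nonneg (by norm_num : (0:ℝ) ≤ 2)]
        exact mul_le_mul_of_nonneg_left hsumn (by norm_num)
      have e3 : |((∑ i, b y τ i * k i) + c) * (U (n : ℝ) y τ) ^ 2 / 2| ≤ (B + |c|) * η / 2 := by
        rw [abs_div, abs_mul, abs_of_nonneg (by norm_num : (0:ℝ) ≤ 2)]
        have h1 : |(∑ i, b y τ i * k i) + c| ≤ B + |c| :=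
          le_trans (abs_add_le _ _) (add_le_add hβq le_rfl)
        have h2 : |(U (n : ℝ) y τ) ^ 2| ≤ η := by
          rw [abs_pow, sq]
          have h4 : |U (n : ℝ) y τ| * |U (n : ℝ) y τ| ≤ η * 1 :=
            mul_le_mul huun huun1 (abs_nonneg _) hηpos.le
          rw [mul_one] at h4
          exact h4
        have := mul_le_mul h1 h2 (abs_nonneg _) (by positivity)
        linarith
      have hAe : A * η = ((ε+1) + 2*K + (B + |c|) + 1) * η := by rw [hA]
      nlinarith [hηpos.le, abs_nonneg c, mul_nonneg (add_nonneg hBnn (abs_nonneg c)) hηpos.le]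
    -- |Pf(-n,q) - (β+c)/2| ≤ A η
    have hPm : |Pf k b ε c U (-(n : ℝ), y, τ) - ((∑ i, b y τ i * k i) + c) / 2| ≤ A * η := by
      have huu : unc U (-(n : ℝ), y, τ) = U (-(n : ℝ)) y τ := rfl
      unfold Pf
      simp only [huu]
      have hsplit : (ε + 1) * D1 (unc U) eS (-(n : ℝ), y, τ) * U (-(n : ℝ)) y τ
            + 2 * (∑ i, k i * D1 (unc U) (eY i) (-(n : ℝ), y, τ) * U (-(n : ℝ)) y τ)
            + ((∑ i, b y τ i * k i) + c) * (U (-(n : ℝ)) y τ) ^ 2 / 2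
            - ((∑ i, b y τ i * k i) + c) / 2
          = (ε + 1) * D1 (unc U) eS (-(n : ℝ), y, τ) * U (-(n : ℝ)) y τ
            + 2 * (∑ i, k i * D1 (unc U) (eY i) (-(n : ℝ), y, τ) * U (-(n : ℝ)) y τ)
            + ((∑ i, b y τ i * k i) + c) * ((U (-(n : ℝ)) y τ) ^ 2 - 1) / 2 := by ring
      rw [hsplit]
      refine le_trans (abs_add_three _ _ _) ?_
      have e1 : |(ε + 1) * D1 (unc U) eS (-(n : ℝ), y, τ) * U (-(n : ℝ)) y τ| ≤ (ε + 1) * η := by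
        rw [abs_mul, abs_mul, abs_of_nonneg (by linarith : (0:ℝ) ≤ ε + 1)]
        have h3 : (ε + 1) * |D1 (unc U) eS (-(n : ℝ), y, τ)| * |U (-(n : ℝ)) y τ|
            ≤ (ε + 1) * η * 1 :=
          mul_le_mul (mul_le_mul_of_nonneg_left husm (by linarith)) huum1
            (abs_nonneg _) (by positivity)
        rw [mul_one] at h3
        exact h3
      have e2 : |2 * ∑ i, k i * D1 (unc U) (eY i) (-(n : ℝ), y, τ) * U (-(n : ℝ)) y τ|
          ≤ 2 * (K * η) := by
        rw [abs_mul, abs_of_nonneg (by norm_num : (0:ℝ) ≤ 2)]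
        exact mul_le_mul_of_nonneg_left hsumm (by norm_num)
      have e3 : |((∑ i, b y τ i * k i) + c) * ((U (-(n : ℝ)) y τ) ^ 2 - 1) / 2|
          ≤ (B + |c|) * η := by
        rw [abs_div, abs_mul, abs_of_nonneg (by norm_num : (0:ℝ) ≤ 2)]
        have h1 : |(∑ i, b y τ i * k i) + c| ≤ B + |c| :=
          le_trans (abs_add_le _ _) (add_le_add hβq le_rfl)
        have h2 : |(U (-(n : ℝ)) y τ) ^ 2 - 1| ≤ 2 * η := by
          have : (U (-(n : ℝ)) y τ) ^ 2 - 1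
              = (U (-(n : ℝ)) y τ - 1) * (U (-(n : ℝ)) y τ + 1) := by ring
          rw [this, abs_mul]
          have h3 : |U (-(n : ℝ)) y τ + 1| ≤ 2 := by
            refine le_trans (abs_add_le _ _) ?_
            rw [abs_one]; linarith [huum1]
          have h4 : |U (-(n : ℝ)) y τ - 1| * |U (-(n : ℝ)) y τ + 1| ≤ η * 2 :=
            mul_le_mul huum h3 (abs_nonneg _) hηpos.le
          linarith
        have := mul_le_mul h1 h2 (abs_nonneg _) (by positivity)
        linarith
      have hAe : A * η = ((ε+1) + 2*K + (B + |c|) + 1) * η := by rw [hA]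
      nlinarith [hηpos.le, abs_nonneg c, mul_nonneg (add_nonneg hBnn (abs_nonneg c)) hηpos.le]
    have : Pf k b ε c U ((n : ℝ), y, τ) - Pf k b ε c U (-(n : ℝ), y, τ)
        + ((∑ i, b y τ i * k i) + c) / 2
        = Pf k b ε c U ((n : ℝ), y, τ)
          - (Pf k b ε c U (-(n : ℝ), y, τ) - ((∑ i, b y τ i * k i) + c) / 2) := by ring
    rw [this]
    refine le_trans (abs_sub _ _) ?_
    linarith
  -- assemble the integral bound
  have hcn : Continuous (fun q : (Fin N → ℝ) × ℝ => Pf k b ε c U ((n : ℝ), q)) :=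
    (cont_Pf hU hbc).comp (continuous_const.prodMk continuous_id)
  have hcm : Continuous (fun q : (Fin N → ℝ) × ℝ => Pf k b ε c U (-(n : ℝ), q)) :=
    (cont_Pf hU hbc).comp (continuous_const.prodMk continuous_id)
  have hcβ : Continuous (fun q : (Fin N → ℝ) × ℝ =>
      ((∑ i, b q.1 q.2 i * k i) + c) / 2) :=
    ((cont_beta hbc k).add continuous_const).div_const 2
  have hsub : IntegrableOn (fun q : (Fin N → ℝ) × ℝ => Pf k b ε c U ((n : ℝ), q)
      - Pf k b ε c U (-(n : ℝ), q)) (Wc N) := integrableOn_Wc (hcn.sub hcm)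
  have hIβ : IntegrableOn (fun q : (Fin N → ℝ) × ℝ =>
      ((∑ i, b q.1 q.2 i * k i) + c) / 2) (Wc N) := integrableOn_Wc hcβ
  have hkey : (∫ q in Wc N, (Pf k b ε c U ((n : ℝ), q) - Pf k b ε c U (-(n : ℝ), q)))
      - (-(c/2))
      = ∫ q in Wc N, (Pf k b ε c U ((n : ℝ), q) - Pf k b ε c U (-(n : ℝ), q)
          + ((∑ i, b q.1 q.2 i * k i) + c) / 2) := by
    rw [integral_add hsub hIβ, half_mean hbc hbmean]
    ring
  rw [Real.dist_eq, hkey]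
  have habs := abs_setIntegral_le (volume_Wc) (integrableOn_Wc ((hcn.sub hcm).add hcβ))
    hbound
  simp only [Pi.add_apply, Pi.sub_apply] at habs
  have hfin : 2 * A * η ≤ δ / 2 := by
    have h5 := mul_le_mul_of_nonneg_left hηδ (by positivity : (0:ℝ) ≤ 2 * A)
    have h6 : 2 * A * (δ / (4 * A)) = δ / 2 := by
      field_simp
      ring
    linarith
  linarith [habs]

end Boundary

section Cells

lemma monotone_cellR : Monotone (cellR N) := by
  intro n m h
  exact prod_mono (Icc_subset_Icc (neg_le_neg (Nat.cast_le.2 h)) (Nat.cast_le.2 h)) subset_rfl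

lemma iUnion_cellR : (⋃ n, cellR N n) = cell N := by
  show (⋃ n : ℕ, Icc (-(n:ℝ)) n ×ˢ Wc N) = (univ : Set ℝ) ×ˢ Wc N
  rw [← Set.iUnion_prod_const]
  congr 1
  refine eq_univ_of_forall fun x => mem_iUnion.2 ?_
  obtain ⟨n, hn⟩ := exists_nat_ge |x|
  exact ⟨n, mem_Icc.2 ⟨by cases abs_le.1 hn with | intro h1 h2 => linarith,
    le_trans (le_abs_self x) hn⟩⟩

lemma cellR_subset_cell (n : ℕ) : cellR N n ⊆ cell N :=
  prod_mono (subset_univ _) subset_rfl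

end Cells

end St6

open St6

theorem statement6 {N : ℕ} (hN : 1 ≤ N) (k : Fin N → ℝ) (hk : IsUnitVector k)
    (b : (Fin N → ℝ) → ℝ → (Fin N → ℝ)) (hb : IsAdmissibleField b)
    (f : ℝ → ℝ) (hf : ContDiff ℝ 1 f) (hf0 : f 0 = 0) (hf1 : f 1 = 0)
    (hfpos : ∀ u ∈ Icc (0 : ℝ) 1, 0 ≤ f u)
    (ε : ℝ) (hε : 0 ≤ ε)
    (c : ℝ) (U : ℝ → (Fin N → ℝ) → ℝ → ℝ)
    (hU : IsRegFront b f k ε 1 c U)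
    (hrange : ∀ s y τ, U s y τ ∈ Ioo (0 : ℝ) 1)
    (hUsL2 : IntegrableOn
      (fun p : ℝ × (Fin N → ℝ) × ℝ => (pdS U p.1 p.2.1 p.2.2) ^ 2) (cell N))
    (hgradL2 : IntegrableOn
      (fun p : ℝ × (Fin N → ℝ) × ℝ =>
        ∑ i, (k i * pdS U p.1 p.2.1 p.2.2 + pdY i U p.1 p.2.1 p.2.2) ^ 2) (cell N))
    (hfint : IntegrableOn (fun p : ℝ × (Fin N → ℝ) × ℝ => f (U p.1 p.2.1 p.2.2)) (cell N))
    (hspeed : (∫ p in cell N, f (U p.1 p.2.1 p.2.2)) = c)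
    (hvanish : DerivsVanish U) :
    (∫ p in cell N,
        ∑ i, (k i * pdS U p.1 p.2.1 p.2.2 + pdY i U p.1 p.2.1 p.2.2) ^ 2) ≤ c / 2 := by
  obtain ⟨m, rfl⟩ : ∃ m, N = m + 1 := ⟨N - 1, (Nat.succ_pred_eq_of_pos hN).symm⟩
  have hsm : ContDiff ℝ (⊤ : ℕ∞) (unc U) := hU.1
  have hd : Differentiable ℝ (unc U) := hsm.differentiable (by simp)
  have hperY : ∀ s y τ i, U s (y + Pi.single i 1) τ = U s y τ := hU.2.1.1
  have hperT : ∀ s y τ, U s y (τ + 1) = U s y τ := hU.2.1.2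
  have pde : RegFrontEq b f k ε 1 c U := hU.2.2.1
  have hlim0 := hU.2.2.2.1
  have hlim1 := hU.2.2.2.2
  have hbsm : ContDiff ℝ (⊤ : ℕ∞) (fun q : (Fin (m+1) → ℝ) × ℝ => b q.1 q.2) := hb.1
  have hbc : Continuous (fun q : (Fin (m+1) → ℝ) × ℝ => b q.1 q.2) := hbsm.continuous
  have hbper : ∀ x t i, b (x + Pi.single i 1) t = b x t := hb.2.1
  have hdiv : ∀ x t, (∑ i, pdX i (fun x' t' => b x' t' i) x t) = 0 := hb.2.2.2.1
  have hbmean0 : ∀ i, (∫ x in Icc (0 : Fin (m+1) → ℝ) 1, ∫ t in Ioo (0:ℝ) 1, b x t i) = 0 :=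
    hb.2.2.2.2
  -- notation
  have hcell : cell (m+1) = (univ : Set ℝ) ×ˢ Wc (m+1) := rfl
  -- G = the gradient-square integrand in D1 language
  have hGeq : ∀ p : E (m+1),
      (∑ i, (k i * pdS U p.1 p.2.1 p.2.2 + pdY i U p.1 p.2.1 p.2.2) ^ 2)
        = ∑ i, (k i * D1 (unc U) eS p + D1 (unc U) (eY i) p) ^ 2 := by
    intro p
    refine Finset.sum_congr rfl fun i _ => ?_
    rw [pdS_eq hd p.1 p.2.1 p.2.2, pdY_eq hd i p.1 p.2.1 p.2.2]
  have hmeascell : MeasurableSet (cell (m+1)) := MeasurableSet.univ.prod measurableSet_Wc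
  have hGint : IntegrableOn
      (fun p => ∑ i, (k i * D1 (unc U) eS p + D1 (unc U) (eY i) p) ^ 2) (cell (m+1)) :=
    hgradL2.congr_fun (fun p _ => hGeq p) hmeascell
  rw [show (∫ p in cell (m+1),
        ∑ i, (k i * pdS U p.1 p.2.1 p.2.2 + pdY i U p.1 p.2.1 p.2.2) ^ 2)
      = ∫ p in cell (m+1), ∑ i, (k i * D1 (unc U) eS p + D1 (unc U) (eY i) p) ^ 2 from
    setIntegral_congr_fun hmeascell (fun p _ => hGeq p)]
  -- continuity of all integrands
  have hcG : Continuous (fun p : E (m+1) =>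
      ∑ i, (k i * D1 (unc U) eS p + D1 (unc U) (eY i) p) ^ 2) :=
    continuous_finset_sum _ fun i _ =>
      ((continuous_const.mul (cont_D1 hsm eS)).add (cont_D1 hsm (eY i))).pow 2
  have hcUs2 : Continuous (fun p : E (m+1) => ε * (D1 (unc U) eS p) ^ 2) :=
    continuous_const.mul ((cont_D1 hsm eS).pow 2)
  have hcfF : Continuous (fun p : E (m+1) => f (unc U p) * unc U p) :=
    (hf.continuous.comp hsm.continuous).mul hsm.continuous
  have hcf : Continuous (fun p : E (m+1) => f (unc U p)) := hf.continuous.comp hsm.continuous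
  -- the key pointwise identity
  have hptw := key_identity hsm hk hdiv pde
  -- pointwise facts about U
  have hfF_le : ∀ p : E (m+1), f (unc U p) * unc U p ≤ f (unc U p) := by
    intro p
    have h1 := hrange p.1 p.2.1 p.2.2
    have h1b : unc U p ≤ 1 := le_of_lt h1.2
    have h2 : 0 ≤ f (unc U p) := hfpos _ ⟨le_of_lt h1.1, le_of_lt h1.2⟩
    have h3 := mul_le_mul_of_nonneg_left h1b h2
    rwa [mul_one] at h3
  have hfF_nonneg : ∀ p : E (m+1), 0 ≤ f (unc U p) := by
    intro p
    have h1 := hrange p.1 p.2.1 p.2.2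
    exact hfpos _ ⟨le_of_lt h1.1, le_of_lt h1.2⟩
  -- the per-n bound
  have hboundn : ∀ n : ℕ,
      (∫ p in cellR (m+1) n, ∑ i, (k i * D1 (unc U) eS p + D1 (unc U) (eY i) p) ^ 2)
        ≤ c + ∫ q in Wc (m+1), (Pf k b ε c U ((n : ℝ), q) - Pf k b ε c U (-(n : ℝ), q)) := by
    intro n
    have intG : IntegrableOn (fun p => ∑ i, (k i * D1 (unc U) eS p + D1 (unc U) (eY i) p) ^ 2)
        (cellR (m+1) n) := integrableOn_cellR hcG n
    have intUs2G : IntegrableOn (fun p => ε * (D1 (unc U) eS p) ^ 2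
        + ∑ i, (k i * D1 (unc U) eS p + D1 (unc U) (eY i) p) ^ 2) (cellR (m+1) n) :=
      integrableOn_cellR (hcUs2.add hcG) n
    have intfF : IntegrableOn (fun p : E (m+1) => f (unc U p) * unc U p) (cellR (m+1) n) :=
      integrableOn_cellR hcfF n
    have intf : IntegrableOn (fun p : E (m+1) => f (unc U p)) (cellR (m+1) n) :=
      integrableOn_cellR hcf n
    have intDP : IntegrableOn (DPf k b ε c U) (cellR (m+1) n) :=
      integrableOn_cellR (cont_DPf hsm hbc) n
    have intDQ : ∀ i, IntegrableOn (DQf b U i) (cellR (m+1) n) :=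
      fun i => integrableOn_cellR (cont_DQf hsm hbsm i) n
    have intDQsum : IntegrableOn (fun p => ∑ i, DQf b U i p) (cellR (m+1) n) :=
      integrableOn_cellR (continuous_finset_sum _ fun i _ => cont_DQf hsm hbsm i) n
    have intDR : IntegrableOn (DRf U) (cellR (m+1) n) :=
      integrableOn_cellR (cont_DRf hsm) n
    have step1 : (∫ p in cellR (m+1) n,
          ∑ i, (k i * D1 (unc U) eS p + D1 (unc U) (eY i) p) ^ 2)
        ≤ ∫ p in cellR (m+1) n, (ε * (D1 (unc U) eS p) ^ 2
          + ∑ i, (k i * D1 (unc U) eS p + D1 (unc U) (eY i) p) ^ 2) := by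
      refine integral_mono intG intUs2G fun p => ?_
      have : 0 ≤ ε * (D1 (unc U) eS p) ^ 2 := by positivity
      simp only [Pi.le_def] at *
      linarith
    have step2 : (∫ p in cellR (m+1) n, (ε * (D1 (unc U) eS p) ^ 2
          + ∑ i, (k i * D1 (unc U) eS p + D1 (unc U) (eY i) p) ^ 2))
        = (∫ p in cellR (m+1) n, f (unc U p) * unc U p)
          + (∫ p in cellR (m+1) n, DPf k b ε c U p)
          + (∫ p in cellR (m+1) n, ∑ i, DQf b U i p)
          - (∫ p in cellR (m+1) n, DRf U p) := by
      have hcDQsum : Continuous (fun p : E (m+1) => ∑ i, DQf b U i p) :=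
        continuous_finset_sum _ fun i _ => cont_DQf hsm hbsm i
      have intABC : IntegrableOn (fun p : E (m+1) => f (unc U p) * unc U p
          + DPf k b ε c U p + ∑ i, DQf b U i p) (cellR (m+1) n) :=
        integrableOn_cellR ((hcfF.add (cont_DPf hsm hbc)).add hcDQsum) n
      have intAB : IntegrableOn (fun p : E (m+1) => f (unc U p) * unc U p
          + DPf k b ε c U p) (cellR (m+1) n) :=
        integrableOn_cellR (hcfF.add (cont_DPf hsm hbc)) n
      have intDP' : IntegrableOn (fun p : E (m+1) => DPf k b ε c U p) (cellR (m+1) n) := intDP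
      have intDR' : IntegrableOn (fun p : E (m+1) => DRf U p) (cellR (m+1) n) := intDR
      rw [setIntegral_congr_fun (measurableSet_cellR n) (fun p _ => hptw p)]
      rw [integral_sub intABC intDR', integral_add intAB intDQsum, integral_add intfF intDP']
    have step3 : (∫ p in cellR (m+1) n, DPf k b ε c U p)
        = ∫ q in Wc (m+1), (Pf k b ε c U ((n : ℝ), q) - Pf k b ε c U (-(n : ℝ), q)) :=
      integral_DPf hsm hbc n
    have step4 : (∫ p in cellR (m+1) n, ∑ i, DQf b U i p) = 0 := by
      rw [integral_finset_sum _ (fun i _ => intDQ i)]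
      exact Finset.sum_eq_zero fun i _ => integral_DQf hsm hbsm hperY hbper i n
    have step5 : (∫ p in cellR (m+1) n, DRf U p) = 0 := integral_DRf hsm hperT n
    have step6 : (∫ p in cellR (m+1) n, f (unc U p) * unc U p)
        ≤ ∫ p in cellR (m+1) n, f (unc U p) :=
      integral_mono intfF intf fun p => hfF_le p
    have step7 : (∫ p in cellR (m+1) n, f (unc U p)) ≤ ∫ p in cell (m+1), f (unc U p) := by
      refine setIntegral_mono_set hfint (Eventually.of_forall fun p => hfF_nonneg p)
        (HasSubset.Subset.eventuallyLE (cellR_subset_cell n))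
    have step8 : (∫ p in cell (m+1), f (unc U p)) = c := hspeed
    linarith
  -- limits
  have hLHS : Tendsto (fun n : ℕ => ∫ p in cellR (m+1) n,
      ∑ i, (k i * D1 (unc U) eS p + D1 (unc U) (eY i) p) ^ 2) atTop
      (𝓝 (∫ p in cell (m+1), ∑ i, (k i * D1 (unc U) eS p + D1 (unc U) (eY i) p) ^ 2)) := by
    have := tendsto_setIntegral_of_monotone (fun n => measurableSet_cellR n)
      monotone_cellR (by rw [iUnion_cellR]; exact hGint)
    rwa [iUnion_cellR] at this
  have hbmean : (∫ q in Wc (m+1), (∑ i, b q.1 q.2 i * k i)) = 0 :=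
    beta_mean hbc hbmean0 k
  have hRHS : Tendsto (fun n : ℕ => c + ∫ q in Wc (m+1),
      (Pf k b ε c U ((n : ℝ), q) - Pf k b ε c U (-(n : ℝ), q))) atTop
      (𝓝 (c + -(c/2))) :=
    tendsto_const_nhds.add (boundary_tendsto hsm hbc hε hrange hvanish hlim0 hlim1 hbmean)
  have := le_of_tendsto_of_tendsto' hLHS hRHS hboundn
  linarith
end
end

section
/- Let f be a positive nonlinearity and let ψ(y,τ) be a smooth function on ℝ^N × ℝ, 1-periodic in each component of y and in τ, with 0 ≤ ψ ≤ 1, satisfying the periodic-parabolic equation ψ_τ − Δ_y ψ + b(y,τ)·∇_y ψ = f(ψ) pointwise. Then ψ is constant, and either ψ ≡ 0 or ψ ≡ 1. -/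
open MeasureTheory Filter Set

noncomputable section

namespace St8

variable {N : ℕ}

lemma hasDerivAt_update_comp {V : (Fin N → ℝ) × ℝ → ℝ} (hV : Differentiable ℝ V)
    (y : Fin N → ℝ) (τ : ℝ) (i : Fin N) (z : ℝ) :
    HasDerivAt (fun w => V (Function.update y i w, τ))
      (fderiv ℝ V (Function.update y i z, τ) (Pi.single i 1, (0:ℝ))) z := by
  have h1 : HasDerivAt (fun w => (Function.update y i w, τ))
      ((Pi.single i 1, (0:ℝ)) : (Fin N → ℝ) × ℝ) z :=
    (hasDerivAt_update y i z).prodMk (hasDerivAt_const z τ)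
  exact (hV _).hasFDerivAt.comp_hasDerivAt z h1

lemma pdX_eq_fderiv {V : (Fin N → ℝ) × ℝ → ℝ} (hV : Differentiable ℝ V)
    (i : Fin N) (y : Fin N → ℝ) (τ : ℝ) :
    pdX i (fun a b => V (a, b)) y τ = fderiv ℝ V (y, τ) (Pi.single i 1, (0:ℝ)) := by
  have := (hasDerivAt_update_comp hV y τ i (y i)).deriv
  rwa [Function.update_eq_self] at this

lemma hasDerivAt_time_comp {V : (Fin N → ℝ) × ℝ → ℝ} (hV : Differentiable ℝ V)
    (y : Fin N → ℝ) (τ : ℝ) :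
    HasDerivAt (fun t => V (y, t)) (fderiv ℝ V (y, τ) ((0 : Fin N → ℝ), (1:ℝ))) τ := by
  have h1 : HasDerivAt (fun t : ℝ => (y, t)) (((0 : Fin N → ℝ), (1:ℝ))) τ :=
    (hasDerivAt_const τ y).prodMk (hasDerivAt_id τ)
  exact (hV _).hasFDerivAt.comp_hasDerivAt τ h1

lemma pdT_eq_fderiv {V : (Fin N → ℝ) × ℝ → ℝ} (hV : Differentiable ℝ V)
    (y : Fin N → ℝ) (τ : ℝ) :
    pdT (fun a b => V (a, b)) y τ = fderiv ℝ V (y, τ) ((0 : Fin N → ℝ), (1:ℝ)) :=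
  (hasDerivAt_time_comp hV y τ).deriv

lemma fderiv_periodic {E F : Type*} [NormedAddCommGroup E] [NormedSpace ℝ E]
    [NormedAddCommGroup F] [NormedSpace ℝ F]
    {V : E → F} (hVd : Differentiable ℝ V) (c : E) (hV : ∀ p, V (p + c) = V p) (p : E) :
    fderiv ℝ V (p + c) = fderiv ℝ V p := by
  have heq : (fun q => V (q + c)) = V := funext hV
  have h : HasFDerivAt (fun q => V (q + c)) (fderiv ℝ V (p + c)) p := by
    have ht : HasFDerivAt (fun q : E => q + c) (ContinuousLinearMap.id ℝ E) p :=
      (hasFDerivAt_id p).add_const c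
    simpa [Function.comp_def] using ((hVd (p + c)).hasFDerivAt.comp p ht)
  rw [heq] at h
  exact h.fderiv.symm

/-- shift invariance by a single integer multiple of a period vector -/
lemma shift_int {α : Type*} [AddGroup α] {u : α → ℝ} {c : α}
    (hper : ∀ x, u (x + c) = u x) : ∀ (m : ℤ) (x : α), u (x + m • c) = u x := by
  have hneg : ∀ x, u (x - c) = u x := by
    intro x
    have := hper (x - c)
    rw [sub_add_cancel] at this
    exact this.symm
  intro m
  induction m using Int.induction_on with
  | zero => simp
  | succ k ih =>
      intro x
      have : x + ((k : ℤ) + 1) • c = (x + (k : ℤ) • c) + c := by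
        rw [add_zsmul, one_zsmul, add_assoc]
      rw [this, hper, ih]
  | pred k ih =>
      intro x
      have : x + (-(k : ℤ) - 1) • c = (x + (-(k : ℤ)) • c) - c := by
        rw [sub_zsmul, one_zsmul, add_sub_assoc, sub_eq_add_neg]
      rw [this, hneg, ih]

/-- Reduce any point to the fundamental cell using periodicity. -/
lemma reduce_to_cell {u : (Fin N → ℝ) → ℝ → ℝ}
    (hperx : ∀ y τ i, u (y + Pi.single i 1) τ = u y τ)
    (hpert : ∀ y τ, u y (τ + 1) = u y τ) (y : Fin N → ℝ) (τ : ℝ) :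
    ∃ y' : Fin N → ℝ, ∃ τ' : ℝ, (∀ i, y' i ∈ Ico (0:ℝ) 1) ∧ τ' ∈ Ico (0:ℝ) 1 ∧
      u y' τ' = u y τ := by
  refine ⟨fun i => Int.fract (y i), Int.fract τ, fun i => ⟨Int.fract_nonneg _, Int.fract_lt_one _⟩,
    ⟨Int.fract_nonneg _, Int.fract_lt_one _⟩, ?_⟩
  -- time reduction
  have htime : ∀ y'' , u y'' (Int.fract τ) = u y'' τ := by
    intro y''
    have h2 := shift_int (u := fun t => u y'' t) (c := (1:ℝ)) (fun t => hpert y'' t) ⌊τ⌋ (Int.fract τ)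
    have h3 : Int.fract τ + (⌊τ⌋ : ℤ) • (1:ℝ) = τ := by
      rw [zsmul_eq_mul, mul_one, Int.fract, sub_add_cancel]
    rw [h3] at h2
    exact h2.symm
  -- space reduction, one coordinate at a time
  have hspace : ∀ (s : Finset (Fin N)) (z : Fin N → ℝ) (t : ℝ),
      u (z + ∑ i ∈ s, (⌊y i⌋ : ℤ) • Pi.single i (1:ℝ)) t = u z t := by
    intro s
    induction s using Finset.induction_on with
    | empty => simp
    | @insert a s' hnot ih =>
        intro z t
        rw [Finset.sum_insert hnot]
        have hre : z + ((⌊y a⌋ : ℤ) • Pi.single a (1:ℝ) + ∑ x ∈ s', (⌊y x⌋ : ℤ) • Pi.single x (1:ℝ))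
            = (z + ∑ x ∈ s', (⌊y x⌋ : ℤ) • Pi.single x (1:ℝ)) + (⌊y a⌋ : ℤ) • Pi.single a (1:ℝ) := by
          abel
        rw [hre, shift_int (u := fun w => u w t) (c := Pi.single a (1:ℝ))
          (fun w => hperx w t a) ⌊y a⌋ _]
        exact ih z t
  have hy : (fun i => Int.fract (y i)) + ∑ i, (⌊y i⌋ : ℤ) • Pi.single i (1:ℝ) = y := by
    funext j
    have : (∑ i, (⌊y i⌋ : ℤ) • Pi.single i (1:ℝ)) j = (⌊y j⌋ : ℝ) := by
      rw [Finset.sum_apply]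
      rw [Finset.sum_eq_single j]
      · simp
      · intro i _ hij
        simp [Pi.single_apply, hij]
      · simp
    simp only [Pi.add_apply, this, Int.fract]
    ring
  calc u (fun i => Int.fract (y i)) (Int.fract τ)
      = u (fun i => Int.fract (y i)) τ := htime _
    _ = u ((fun i => Int.fract (y i)) + ∑ i, (⌊y i⌋ : ℤ) • Pi.single i (1:ℝ)) τ :=
        (hspace Finset.univ _ τ).symm
    _ = u y τ := by rw [hy]


lemma main_zero {n : ℕ}
    (b : (Fin (n+1) → ℝ) → ℝ → (Fin (n+1) → ℝ)) (hb : IsAdmissibleField b)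
    (f : ℝ → ℝ) (hf : IsPositiveNonlinearity f)
    (ψ : (Fin (n+1) → ℝ) → ℝ → ℝ)
    (hsmooth : ContDiff ℝ (⊤ : ℕ∞) (fun p : (Fin (n+1) → ℝ) × ℝ => ψ p.1 p.2))
    (hperx : ∀ y τ i, ψ (y + Pi.single i 1) τ = ψ y τ)
    (hpert : ∀ y τ, ψ y (τ + 1) = ψ y τ)
    (hrange : ∀ y τ, ψ y τ ∈ Icc (0 : ℝ) 1)
    (heq : ∀ y τ, pdT ψ y τ - (∑ i, pdX i (pdX i ψ) y τ)
      + (∑ i, b y τ i * pdX i ψ y τ) = f (ψ y τ)) :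
    ∀ y τ, f (ψ y τ) = 0 := by
  classical
  let Ψ : (Fin (n+1) → ℝ) × ℝ → ℝ := fun p => ψ p.1 p.2
  have hΨ : ContDiff ℝ (⊤ : ℕ∞) Ψ := hsmooth
  have hΨd : Differentiable ℝ Ψ := hΨ.differentiable (by simp)
  let Bf : Fin (n+1) → (Fin (n+1) → ℝ) × ℝ → ℝ := fun i p => b p.1 p.2 i
  have hBf : ∀ i, ContDiff ℝ (⊤ : ℕ∞) (Bf i) := fun i =>
    (ContinuousLinearMap.proj i : ((Fin (n+1)) → ℝ) →L[ℝ] ℝ).contDiff.comp hb.1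
  have hBfd : ∀ i, Differentiable ℝ (Bf i) := fun i => (hBf i).differentiable (by simp)
  let W : Fin (n+1) → (Fin (n+1) → ℝ) × ℝ → ℝ :=
    fun i p => fderiv ℝ Ψ p (Pi.single i 1, (0:ℝ))
  have hW : ∀ i, ContDiff ℝ (⊤ : ℕ∞) (W i) :=
    fun i => (hΨ.fderiv_right (by simp)).clm_apply contDiff_const
  have hWd : ∀ i, Differentiable ℝ (W i) := fun i => (hW i).differentiable (by simp)
  let V : Fin (n+1) → (Fin (n+1) → ℝ) × ℝ → ℝ := fun i p => Bf i p * Ψ p - W i p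
  have hV : ∀ i, ContDiff ℝ (⊤ : ℕ∞) (V i) := fun i => ((hBf i).mul hΨ).sub (hW i)
  have hVd : ∀ i, Differentiable ℝ (V i) := fun i => (hV i).differentiable (by simp)
  have hWpd : ∀ (i : Fin (n+1)) y τ, pdX i ψ y τ = W i (y, τ) :=
    fun i y τ => pdX_eq_fderiv hΨd i y τ
  -- periodicity
  have perΨ : ∀ (j : Fin (n+1)) p, Ψ (p + (Pi.single j 1, (0:ℝ))) = Ψ p := by
    intro j p
    show ψ (p.1 + Pi.single j 1) (p.2 + 0) = ψ p.1 p.2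
    rw [add_zero]; exact hperx _ _ j
  have perW : ∀ (i j : Fin (n+1)) p, W i (p + (Pi.single j 1, (0:ℝ))) = W i p := by
    intro i j p
    show fderiv ℝ Ψ _ _ = fderiv ℝ Ψ _ _
    rw [fderiv_periodic hΨd _ (perΨ j) p]
  have perV : ∀ (i j : Fin (n+1)) p, V i (p + (Pi.single j 1, (0:ℝ))) = V i p := by
    intro i j p
    show Bf i _ * Ψ _ - W i _ = Bf i p * Ψ p - W i p
    have hBp : Bf i (p + (Pi.single j 1, (0:ℝ))) = Bf i p := by
      show b (p.1 + Pi.single j 1) (p.2 + 0) i = b p.1 p.2 i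
      rw [add_zero, hb.2.1]
    rw [hBp, perΨ, perW]
  -- key pointwise identity
  have keyA : ∀ y τ, f (ψ y τ) =
      pdT ψ y τ + ∑ i, fderiv ℝ (V i) (y, τ) (Pi.single i 1, (0:ℝ)) := by
    intro y τ
    rw [← heq y τ]
    have hsum : ∀ i : Fin (n+1), fderiv ℝ (V i) (y, τ) (Pi.single i 1, (0:ℝ)) =
        (pdX i (fun x' t' => b x' t' i) y τ) * ψ y τ + b y τ i * pdX i ψ y τ
          - pdX i (pdX i ψ) y τ := by
      intro i
      have hd1 : DifferentiableAt ℝ (fun p => Bf i p * Ψ p) (y, τ) := ((hBfd i) _).mul (hΨd _)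
      have hVsplit : fderiv ℝ (V i) (y, τ) =
          fderiv ℝ (fun p => Bf i p * Ψ p) (y, τ) - fderiv ℝ (W i) (y, τ) :=
        fderiv_sub hd1 ((hWd i) _)
      have hmul : fderiv ℝ (fun p => Bf i p * Ψ p) (y, τ) =
          Bf i (y, τ) • fderiv ℝ Ψ (y, τ) + Ψ (y, τ) • fderiv ℝ (Bf i) (y, τ) :=
        fderiv_mul ((hBfd i) _) (hΨd _)
      have e1 : fderiv ℝ Ψ (y, τ) (Pi.single i 1, (0:ℝ)) = pdX i ψ y τ := (hWpd i y τ).symm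
      have e2 : fderiv ℝ (Bf i) (y, τ) (Pi.single i 1, (0:ℝ))
          = pdX i (fun x' t' => b x' t' i) y τ :=
        (pdX_eq_fderiv (hBfd i) i y τ).symm
      have e3 : fderiv ℝ (W i) (y, τ) (Pi.single i 1, (0:ℝ)) = pdX i (pdX i ψ) y τ := by
        have hWfun : pdX i ψ = (fun a b' => W i (a, b')) := by
          funext a b'; exact hWpd i a b'
        rw [hWfun]
        exact (pdX_eq_fderiv (hWd i) i y τ).symm
      rw [hVsplit]
      rw [ContinuousLinearMap.sub_apply, hmul, ContinuousLinearMap.add_apply,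
        ContinuousLinearMap.smul_apply, ContinuousLinearMap.smul_apply,
        smul_eq_mul, smul_eq_mul, e1, e2, e3]
      show b y τ i * pdX i ψ y τ + ψ y τ * pdX i (fun x' t' => b x' t' i) y τ
          - pdX i (pdX i ψ) y τ = _
      ring
    rw [Finset.sum_congr rfl (fun i _ => hsum i)]
    have hdiv : ∑ i : Fin (n+1), (pdX i (fun x' t' => b x' t' i) y τ * ψ y τ
          + b y τ i * pdX i ψ y τ - pdX i (pdX i ψ) y τ)
        = ∑ i : Fin (n+1), b y τ i * pdX i ψ y τ - ∑ i : Fin (n+1), pdX i (pdX i ψ) y τ := by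
      rw [Finset.sum_sub_distrib, Finset.sum_add_distrib, ← Finset.sum_mul,
        hb.2.2.2.1 y τ, zero_mul, zero_add]
    rw [hdiv]
    ring
  -- time integral vanishes
  have keyB : ∀ y, (∫ τ in Ioo (0:ℝ) 1, pdT ψ y τ) = 0 := by
    intro y
    have hd : ∀ t : ℝ, HasDerivAt (fun t' => ψ y t') (pdT ψ y t) t := by
      intro t
      have h := hasDerivAt_time_comp hΨd y t
      rwa [← pdT_eq_fderiv hΨd y t] at h
    have hcont : Continuous (fun t => pdT ψ y t) := by
      have h1 : ContDiff ℝ (⊤ : ℕ∞)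
          (fun p : (Fin (n+1) → ℝ) × ℝ => fderiv ℝ Ψ p ((0:Fin (n+1) → ℝ), (1:ℝ))) :=
        (hΨ.fderiv_right (by simp)).clm_apply contDiff_const
      have h2 : (fun t => pdT ψ y t)
          = fun t => fderiv ℝ Ψ (y, t) ((0:Fin (n+1) → ℝ), (1:ℝ)) := by
        funext t; exact pdT_eq_fderiv hΨd y t
      rw [h2]
      exact h1.continuous.comp (continuous_const.prodMk continuous_id)
    have hio : (∫ τ in Ioo (0:ℝ) 1, pdT ψ y τ) = ∫ τ in (0:ℝ)..1, pdT ψ y τ := by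
      rw [intervalIntegral.integral_of_le zero_le_one, integral_Ioc_eq_integral_Ioo]
    rw [hio, intervalIntegral.integral_eq_sub_of_hasDerivAt (fun t _ => hd t)
      (hcont.intervalIntegrable 0 1)]
    have h01 := hpert y 0
    rw [zero_add] at h01
    rw [h01, sub_self]
  -- space integral of the divergence vanishes
  have keyC : ∀ τ, (∫ y in Icc (0:Fin (n+1) → ℝ) 1,
      ∑ i, fderiv ℝ (V i) (y, τ) (Pi.single i 1, (0:ℝ))) = 0 := by
    intro τ
    have hle : (0 : Fin (n+1) → ℝ) ≤ 1 := fun i => zero_le_one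
    set fdiv : Fin (n+1) → (Fin (n+1) → ℝ) → ℝ := fun i x => V i (x, τ) with hfdiv
    set fdiv' : Fin (n+1) → (Fin (n+1) → ℝ) → (Fin (n+1) → ℝ) →L[ℝ] ℝ :=
      fun i x => (fderiv ℝ (V i) (x, τ)).comp (ContinuousLinearMap.inl ℝ (Fin (n+1) → ℝ) ℝ)
      with hfdiv'
    have happ : ∀ (i : Fin (n+1)) x, fdiv' i x (Pi.single i 1)
        = fderiv ℝ (V i) (x, τ) (Pi.single i 1, (0:ℝ)) := by
      intro i x
      simp [hfdiv', ContinuousLinearMap.comp_apply]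
    have Hd : ∀ x ∈ (Set.pi univ fun j => Ioo ((0:Fin (n+1) → ℝ) j) ((1:Fin (n+1) → ℝ) j))
        \ (∅ : Set (Fin (n+1) → ℝ)), ∀ i, HasFDerivAt (fdiv i) (fdiv' i x) x := by
      intro x _ i
      exact ((hVd i) (x, τ)).hasFDerivAt.comp x (hasFDerivAt_prodMk_left (𝕜 := ℝ) x τ)
    have Hc : ∀ i, ContinuousOn (fdiv i) (Icc 0 1) :=
      fun i => ((hV i).continuous.comp (continuous_id.prodMk continuous_const)).continuousOn
    have hcontsum : Continuous (fun x : Fin (n+1) → ℝ =>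
        ∑ i, fderiv ℝ (V i) (x, τ) (Pi.single i 1, (0:ℝ))) := by
      apply continuous_finset_sum
      intro i _
      have h1 : ContDiff ℝ (⊤ : ℕ∞) (fun p : (Fin (n+1) → ℝ) × ℝ =>
          fderiv ℝ (V i) p (Pi.single i 1, (0:ℝ))) :=
        ((hV i).fderiv_right (by simp)).clm_apply contDiff_const
      exact h1.continuous.comp (continuous_id.prodMk continuous_const)
    have Hi : IntegrableOn (fun x => ∑ i, fdiv' i x (Pi.single i 1))
        (Icc (0:Fin (n+1) → ℝ) 1) := by
      have : (fun x => ∑ i, fdiv' i x (Pi.single i 1))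
          = fun x => ∑ i, fderiv ℝ (V i) (x, τ) (Pi.single i 1, (0:ℝ)) := by
        funext x
        exact Finset.sum_congr rfl fun i _ => happ i x
      rw [this]
      exact hcontsum.continuousOn.integrableOn_compact isCompact_Icc
    have hdivthm := MeasureTheory.integral_divergence_of_hasFDerivAt_off_countable'
      (0:Fin (n+1) → ℝ) 1 hle fdiv fdiv' ∅ countable_empty Hc Hd Hi
    have hfaces : ∀ (i : Fin (n+1)) (x : Fin n → ℝ),
        fdiv i (Fin.insertNth (α := fun _ : Fin (n+1) => ℝ) i ((1:Fin (n+1) → ℝ) i) x)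
          = fdiv i (Fin.insertNth (α := fun _ : Fin (n+1) => ℝ) i ((0:Fin (n+1) → ℝ) i) x) := by
      intro i x
      have h1 : Fin.insertNth (α := fun _ : Fin (n+1) => ℝ) i ((1:Fin (n+1) → ℝ) i) x
          = Fin.insertNth (α := fun _ : Fin (n+1) => ℝ) i ((0:Fin (n+1) → ℝ) i) x + Pi.single i 1 := by
        funext j
        refine Fin.succAboveCases i ?_ ?_ j
        · simp
        · intro k
          simp [Fin.succAbove_ne i k, Pi.single_eq_of_ne (Fin.succAbove_ne i k)]
      rw [h1]
      show V i (_, τ) = V i (_, τ)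
      have hp : ((Fin.insertNth (α := fun _ : Fin (n+1) => ℝ) i ((0:Fin (n+1) → ℝ) i) x + Pi.single i 1), τ)
          = ((Fin.insertNth (α := fun _ : Fin (n+1) => ℝ) i ((0:Fin (n+1) → ℝ) i) x), τ) + (Pi.single i 1, (0:ℝ)) := by
        rw [Prod.mk_add_mk, add_zero]
      rw [hp]
      exact perV i i _
    have hLHS : (∫ x in Icc (0:Fin (n+1) → ℝ) 1, ∑ i, fdiv' i x (Pi.single i 1))
        = ∫ y in Icc (0:Fin (n+1) → ℝ) 1,
            ∑ i, fderiv ℝ (V i) (y, τ) (Pi.single i 1, (0:ℝ)) := by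
      apply integral_congr_ae
      exact Eventually.of_forall fun x => Finset.sum_congr rfl fun i _ => happ i x
    rw [← hLHS, hdivthm]
    refine Finset.sum_eq_zero fun i _ => sub_eq_zero.2 ?_
    exact integral_congr_ae (Eventually.of_forall fun x => hfaces i x)
  -- nonnegativity of f on [0,1]
  have hf0 : ∀ u ∈ Icc (0:ℝ) 1, 0 ≤ f u := by
    rintro u ⟨h0, h1⟩
    rcases eq_or_lt_of_le h0 with h | h
    · rw [← h, hf.2.1]
    rcases eq_or_lt_of_le h1 with h' | h'
    · rw [h', hf.2.2.1]
    · exact (hf.2.2.2 u ⟨h, h'⟩).le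
  -- total integral is zero
  have hmeas : (volume : Measure ((Fin (n+1) → ℝ) × ℝ)).restrict
        ((Icc (0:Fin (n+1) → ℝ) 1) ×ˢ (Ioo (0:ℝ) 1))
      = (volume.restrict (Icc (0:Fin (n+1) → ℝ) 1)).prod (volume.restrict (Ioo (0:ℝ) 1)) := by
    rw [Measure.volume_eq_prod, Measure.prod_restrict]
  have hIntOn : ∀ (h : (Fin (n+1) → ℝ) × ℝ → ℝ), Continuous h →
      IntegrableOn h ((Icc (0:Fin (n+1) → ℝ) 1) ×ˢ (Ioo (0:ℝ) 1)) := by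
    intro h hc
    have hcomp : IsCompact ((Icc (0:Fin (n+1) → ℝ) 1) ×ˢ (Icc (0:ℝ) 1)) :=
      isCompact_Icc.prod isCompact_Icc
    exact (hc.continuousOn.integrableOn_compact hcomp).mono_set
      (prod_mono_right Ioo_subset_Icc_self)
  have hgc : Continuous (fun p : (Fin (n+1) → ℝ) × ℝ => f (Ψ p)) :=
    (hf.1.continuous).comp hΨ.continuous
  set Dv : (Fin (n+1) → ℝ) × ℝ → ℝ :=
    fun p => ∑ i, fderiv ℝ (V i) p (Pi.single i 1, (0:ℝ)) with hDv
  have hDc : Continuous Dv := by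
    apply continuous_finset_sum
    intro i _
    exact ((ContDiff.fderiv_right (m := (⊤ : ℕ∞)) (hV i) (by simp)).clm_apply contDiff_const).continuous
  have hTc : Continuous (fun p : (Fin (n+1) → ℝ) × ℝ => pdT ψ p.1 p.2) := by
    have h2 : (fun p : (Fin (n+1) → ℝ) × ℝ => pdT ψ p.1 p.2)
        = fun p => fderiv ℝ Ψ p ((0:Fin (n+1) → ℝ), (1:ℝ)) := by
      funext p; exact pdT_eq_fderiv hΨd p.1 p.2
    rw [h2]
    exact ((ContDiff.fderiv_right (m := (⊤ : ℕ∞)) hΨ (by simp)).clm_apply contDiff_const).continuous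
  have hJ : (∫ p in (Icc (0:Fin (n+1) → ℝ) 1) ×ˢ (Ioo (0:ℝ) 1), f (Ψ p)) = 0 := by
    have hint : Integrable (fun p => f (Ψ p))
        ((volume.restrict (Icc (0:Fin (n+1) → ℝ) 1)).prod (volume.restrict (Ioo (0:ℝ) 1))) := by
      rw [← hmeas]; exact hIntOn _ hgc
    have hintD : Integrable Dv
        ((volume.restrict (Icc (0:Fin (n+1) → ℝ) 1)).prod (volume.restrict (Ioo (0:ℝ) 1))) := by
      rw [← hmeas]; exact hIntOn _ hDc
    have step1 : (∫ p in (Icc (0:Fin (n+1) → ℝ) 1) ×ˢ (Ioo (0:ℝ) 1), f (Ψ p))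
        = ∫ y in Icc (0:Fin (n+1) → ℝ) 1, ∫ τ in Ioo (0:ℝ) 1, f (Ψ (y, τ)) := by
      rw [hmeas]
      exact integral_prod _ hint
    have step2 : ∀ y : Fin (n+1) → ℝ,
        (∫ τ in Ioo (0:ℝ) 1, f (Ψ (y, τ))) = ∫ τ in Ioo (0:ℝ) 1, Dv (y, τ) := by
      intro y
      have hfun : (fun τ => f (Ψ (y, τ))) = fun τ => pdT ψ y τ + Dv (y, τ) := by
        funext τ
        exact keyA y τ
      rw [hfun]
      have hi1 : IntegrableOn (fun τ => pdT ψ y τ) (Ioo (0:ℝ) 1) :=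
        ((hTc.comp (continuous_const.prodMk continuous_id)).continuousOn.integrableOn_compact
          isCompact_Icc).mono_set Ioo_subset_Icc_self
      have hi2 : IntegrableOn (fun τ => Dv (y, τ)) (Ioo (0:ℝ) 1) :=
        ((hDc.comp (continuous_const.prodMk continuous_id)).continuousOn.integrableOn_compact
          isCompact_Icc).mono_set Ioo_subset_Icc_self
      rw [integral_add hi1 hi2, keyB y, zero_add]
    have step3 : (∫ y in Icc (0:Fin (n+1) → ℝ) 1, ∫ τ in Ioo (0:ℝ) 1, Dv (y, τ))
        = ∫ τ in Ioo (0:ℝ) 1, ∫ y in Icc (0:Fin (n+1) → ℝ) 1, Dv (y, τ) := by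
      apply integral_integral_swap
      rw [Function.uncurry_def]
      rw [← hmeas]
      exact hIntOn _ hDc
    rw [step1]
    rw [integral_congr_ae (Eventually.of_forall step2), step3]
    have step4 : ∀ τ : ℝ, (∫ y in Icc (0:Fin (n+1) → ℝ) 1, Dv (y, τ)) = 0 := fun τ => keyC τ
    rw [integral_congr_ae (Eventually.of_forall step4), integral_zero]
  -- conclude pointwise vanishing
  intro y τ
  by_contra hne
  have hg0 : ∀ p : (Fin (n+1) → ℝ) × ℝ, 0 ≤ f (Ψ p) := fun p => hf0 _ (hrange p.1 p.2)
  obtain ⟨y', τ', hy', hτ', hval⟩ := reduce_to_cell hperx hpert y τ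
  have hpos : 0 < f (Ψ (y', τ')) := by
    have hne' : f (Ψ (y', τ')) ≠ 0 := by
      show f (ψ y' τ') ≠ 0
      rw [hval]; exact hne
    exact lt_of_le_of_ne (hg0 _) (Ne.symm hne')
  set Uo := (fun p : (Fin (n+1) → ℝ) × ℝ => f (Ψ p)) ⁻¹' (Ioi (0:ℝ)) with hUodef
  have hUo : IsOpen Uo := isOpen_Ioi.preimage hgc
  set Box : Set ((Fin (n+1) → ℝ) × ℝ) :=
    (Set.pi univ fun _ => Ioo (0:ℝ) 1) ×ˢ (Ioo (0:ℝ) 1) with hBoxdef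
  have hBoxOpen : IsOpen Box :=
    (isOpen_set_pi finite_univ fun _ _ => isOpen_Ioo).prod isOpen_Ioo
  have hBoxsub : Box ⊆ (Icc (0:Fin (n+1) → ℝ) 1) ×ˢ (Ioo (0:ℝ) 1) := by
    apply Set.prod_mono_left
    intro x hx
    rw [mem_Icc]
    constructor
    · intro i; exact (hx i (mem_univ i)).1.le
    · intro i; exact (hx i (mem_univ i)).2.le
  have hmemcl : (y', τ') ∈ closure Box := by
    rw [hBoxdef, closure_prod_eq, closure_pi_set]
    constructor
    · intro i _
      rw [closure_Ioo one_ne_zero.symm]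
      exact Ico_subset_Icc_self (hy' i)
    · rw [closure_Ioo one_ne_zero.symm]
      exact Ico_subset_Icc_self hτ'
  have hne2 : (Uo ∩ Box).Nonempty := by
    rw [mem_closure_iff] at hmemcl
    exact hmemcl Uo hUo hpos
  have hposmeas : 0 < volume (Uo ∩ Box) := (hUo.inter hBoxOpen).measure_pos volume hne2
  have hae : (fun p : (Fin (n+1) → ℝ) × ℝ => f (Ψ p))
      =ᵐ[volume.restrict ((Icc (0:Fin (n+1) → ℝ) 1) ×ˢ (Ioo (0:ℝ) 1))] 0 := by
    refine (integral_eq_zero_iff_of_nonneg (fun p => hg0 p) ?_).1 hJ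
    exact hIntOn _ hgc
  have hmeasNe : MeasurableSet {p : (Fin (n+1) → ℝ) × ℝ | f (Ψ p) ≠ 0} := by
    have : {p : (Fin (n+1) → ℝ) × ℝ | f (Ψ p) ≠ 0}
        = (fun p : (Fin (n+1) → ℝ) × ℝ => f (Ψ p)) ⁻¹' ({0}ᶜ) := rfl
    rw [this]
    exact (isClosed_singleton.isOpen_compl).preimage hgc |>.measurableSet
  have hnull : volume ({p : (Fin (n+1) → ℝ) × ℝ | f (Ψ p) ≠ 0}
      ∩ ((Icc (0:Fin (n+1) → ℝ) 1) ×ˢ (Ioo (0:ℝ) 1))) = 0 := by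
    have h1 := ae_iff.1 hae
    simp only [Pi.zero_apply] at h1
    rw [Measure.restrict_apply hmeasNe] at h1
    exact h1
  have hcontra : volume (Uo ∩ Box) = 0 := by
    refine measure_mono_null ?_ hnull
    intro p hp
    exact ⟨ne_of_gt hp.1, hBoxsub hp.2⟩
  rw [hcontra] at hposmeas
  exact lt_irrefl _ hposmeas

end St8

/-- a space-time periodic solution `ψ` with `0 ≤ ψ ≤ 1` of
`ψ_τ - Δ_y ψ + b·∇_y ψ = f(ψ)`, for a positive nonlinearity `f`, is constant and equals
`0` or `1` identically. -/
theorem statement8 {N : ℕ} (hN : 1 ≤ N)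
    (b : (Fin N → ℝ) → ℝ → (Fin N → ℝ)) (hb : IsAdmissibleField b)
    (f : ℝ → ℝ) (hf : IsPositiveNonlinearity f)
    (ψ : (Fin N → ℝ) → ℝ → ℝ)
    (hsmooth : ContDiff ℝ (⊤ : ℕ∞) (fun p : (Fin N → ℝ) × ℝ => ψ p.1 p.2))
    (hperx : ∀ y τ i, ψ (y + Pi.single i 1) τ = ψ y τ)
    (hpert : ∀ y τ, ψ y (τ + 1) = ψ y τ)
    (hrange : ∀ y τ, ψ y τ ∈ Icc (0 : ℝ) 1)
    (heq : ∀ y τ,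
      pdT ψ y τ - (∑ i, pdX i (pdX i ψ) y τ) + (∑ i, b y τ i * pdX i ψ y τ) = f (ψ y τ)) :
    (∀ y τ y' τ', ψ y τ = ψ y' τ') ∧
      ((∀ y τ, ψ y τ = 0) ∨ (∀ y τ, ψ y τ = 1)) := by
  classical
  obtain ⟨n, rfl⟩ : ∃ n, N = n + 1 := ⟨N - 1, (Nat.succ_pred_eq_of_pos hN).symm⟩
  have hzero : ∀ y τ, f (ψ y τ) = 0 :=
    St8.main_zero b hb f hf ψ hsmooth hperx hpert hrange heq
  have hval : ∀ y τ, ψ y τ = 0 ∨ ψ y τ = 1 := by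
    intro y τ
    rcases hrange y τ with ⟨h0, h1⟩
    rcases eq_or_lt_of_le h0 with h | h
    · exact Or.inl h.symm
    rcases eq_or_lt_of_le h1 with h' | h'
    · exact Or.inr h'
    · exact absurd (hzero y τ) (ne_of_gt (hf.2.2.2 _ ⟨h, h'⟩))
  have hcont : Continuous (fun p : (Fin (n+1) → ℝ) × ℝ => ψ p.1 p.2) := hsmooth.continuous
  have hconst : ∀ y τ y' τ', ψ y τ = ψ y' τ' := by
    intro y τ y' τ'
    by_contra hne
    have h05 : ∃ p : (Fin (n+1) → ℝ) × ℝ, ψ p.1 p.2 = 1/2 := by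
      rcases hval y τ with h1 | h1 <;> rcases hval y' τ' with h2 | h2
      · exact absurd (h1.trans h2.symm) hne
      · have hiv := intermediate_value_univ ((y, τ) : (Fin (n+1) → ℝ) × ℝ) (y', τ') hcont
        have hm : (1/2 : ℝ) ∈ Icc (ψ y τ) (ψ y' τ') := by rw [h1, h2]; norm_num
        exact hiv hm
      · have hiv := intermediate_value_univ ((y', τ') : (Fin (n+1) → ℝ) × ℝ) (y, τ) hcont
        have hm : (1/2 : ℝ) ∈ Icc (ψ y' τ') (ψ y τ) := by rw [h1, h2]; norm_num
        exact hiv hm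
      · exact absurd (h1.trans h2.symm) hne
    obtain ⟨p, hp⟩ := h05
    rcases hval p.1 p.2 with h | h <;> rw [hp] at h <;> norm_num at h
  refine ⟨hconst, ?_⟩
  rcases hval 0 0 with h | h
  · exact Or.inl fun y τ => (hconst y τ 0 0).trans h
  · exact Or.inr fun y τ => (hconst y τ 0 0).trans h
end
end
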